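/- arXiv:1803.06251 — 6 statements merged into one kernel-verified Lean document; each statement's English description precedes it below -/
import Mathlib

section
/- Let (F^t_{i,j}) be a family of real numbers indexed by i ≥ 0, j ≥ 0, t ≥ 0 satisfying the tropical KP equation F^t_{i,j} + F^{t+1}_{i,j+1} = max(F^t_{i+1,j+1} + F^{t+1}_{i-1,j}, F^t_{i,j+1} + F^{t+1}_{i,j}) for all i ≥ 1, j ≥ 0, t ≥ 0. Define Q^t_{i,j} = F^t_{i,j} + F^{t+1}_{i-1,j} − F^t_{i-1,j} − F^{t+1}_{i,j} and W^t_{i,j} = F^t_{i,j} + F^t_{i,j+1} − F^t_{i-1,j} − F^t_{i+1,j+1}. Then for all i ≥ 1, j ≥ 0, t ≥ 0 one has Q^t_{i+1,j+1} = (min(Q^t_{i+1,j}, W^t_{i+1,j}) − min(Q^t_{i,j}, W^t_{i,j})) + Q^t_{i,j} and W^{t+1}_{i,j} = (min(Q^t_{i+1,j}, W^t_{i+1,j}) − min(Q^t_{i,j}, W^t_{i,j})) + W^t_{i,j}. -/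
/- STATEMENT 0: If a family (F^t_{i,j}) of real numbers satisfies the tropical KP
equation, then the derived variables Q, W satisfy the recurrence (eq:QandW).
Indices: rows are written as `i+1` (resp. `i+2`) to encode "i ≥ 1" without
natural subtraction; `F t i j` denotes F^t_{i,j}. -/
theorem tropical_KP_gives_QW_recurrence
    (F Q W : ℕ → ℕ → ℕ → ℝ)
    -- tropical KP equation, for all i ≥ 1 (encoded as i+1), j ≥ 0, t ≥ 0
    (hKP : ∀ t i j, F t (i+1) j + F (t+1) (i+1) (j+1) =
      max (F t (i+2) (j+1) + F (t+1) i j) (F t (i+1) (j+1) + F (t+1) (i+1) j))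
    -- Q^t_{i,j} = F^t_{i,j} + F^{t+1}_{i-1,j} − F^t_{i-1,j} − F^{t+1}_{i,j}  (i ≥ 1)
    (hQ : ∀ t i j, Q t (i+1) j = F t (i+1) j + F (t+1) i j - F t i j - F (t+1) (i+1) j)
    -- W^t_{i,j} = F^t_{i,j} + F^t_{i,j+1} − F^t_{i-1,j} − F^t_{i+1,j+1}  (i ≥ 1)
    (hW : ∀ t i j, W t (i+1) j = F t (i+1) j + F t (i+1) (j+1) - F t i j - F t (i+2) (j+1)) :
    ∀ t i j,
      Q t (i+2) (j+1) =
        (min (Q t (i+2) j) (W t (i+2) j) - min (Q t (i+1) j) (W t (i+1) j)) + Q t (i+1) j ∧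
      W (t+1) (i+1) j =
        (min (Q t (i+2) j) (W t (i+2) j) - min (Q t (i+1) j) (W t (i+1) j)) + W t (i+1) j := by
  intro t i j
  have key : ∀ k, min (Q t (k+1) j) (W t (k+1) j) =
      F (t+1) k j + F t (k+1) (j+1) - F t k j - F (t+1) (k+1) (j+1) := by
    intro k
    have h1 := hKP t k j
    rw [hQ, hW]
    rcases le_total (F t (k+2) (j+1) + F (t+1) k j) (F t (k+1) (j+1) + F (t+1) (k+1) j) with h | h
    · rw [max_eq_right h] at h1
      rw [min_eq_left (by linarith)]
      linarith
    · rw [max_eq_left h] at h1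
      rw [min_eq_right (by linarith)]
      linarith
  have k1 := key i
  have k2 := key (i+1)
  constructor
  · rw [k1, k2, hQ t (i+1) (j+1), hQ t i j]
    ring
  · rw [k1, k2, hW (t+1) i j, hW t i j]
    ring
end

section
/- Let S^0, S^1, …, S^T be skew semistandard tableaux such that each S^{t+1} is obtained from S^t by a jeu de taquin slide (starting from some inside corner of S^t). For 0 ≤ t ≤ T, i ≥ 0, j ≥ 0, let F^t_{i,j} be the number of boxes in rows 1,…,i of S^t that carry an entry ≤ j, where the boxes of the inner shape of S^t are regarded as carrying entry 0 (so they are counted for every j ≥ 0), and F^t_{0,j} = 0. Then for all i ≥ 1, j ≥ 0, and 0 ≤ t ≤ T−1, the tropical KP equation holds: F^t_{i,j} + F^{t+1}_{i,j+1} = max(F^t_{i+1,j+1} + F^{t+1}_{i-1,j}, F^t_{i,j+1} + F^{t+1}_{i,j}). -/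
/-- A skew semistandard tableau: Young diagrams `inner ⊆ outer` (rows and columns
0-indexed, given by row lengths), with a positive-integer entry in each box of the
skew shape, rows weakly increasing, columns strictly increasing.  Entries outside
the skew shape are normalized to `0`. -/
structure SkewSSYT where
  outer : ℕ → ℕ
  inner : ℕ → ℕ
  outer_anti : ∀ i, outer (i+1) ≤ outer i
  inner_anti : ∀ i, inner (i+1) ≤ inner i
  inner_le_outer : ∀ i, inner i ≤ outer i
  outer_finite : ∃ d, ∀ i, d ≤ i → outer i = 0
  entry : ℕ → ℕ → ℕ
  entry_pos : ∀ i j, inner i ≤ j → j < outer i → 1 ≤ entry i j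
  entry_zero : ∀ i j, j < inner i ∨ outer i ≤ j → entry i j = 0
  row_weak : ∀ i j, inner i ≤ j → j + 1 < outer i → entry i j ≤ entry i (j+1)
  col_strict : ∀ i j, inner i ≤ j → j < outer (i+1) → entry i j < entry (i+1) j

/-- The box `p = (row, column)` (0-indexed) belongs to the skew shape of `S`. -/
def inSkew (S : SkewSSYT) (p : ℕ × ℕ) : Prop :=
  S.inner p.1 ≤ p.2 ∧ p.2 < S.outer p.1

instance (S : SkewSSYT) (p : ℕ × ℕ) : Decidable (inSkew S p) :=
  inferInstanceAs (Decidable (_ ∧ _))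

/-- `Fcnt S i j` = number of boxes in rows 1,…,i of `S` carrying an entry ≤ j,
where boxes of the inner shape are regarded as carrying entry 0. -/
def Fcnt (S : SkewSSYT) (i j : ℕ) : ℕ :=
  ∑ r ∈ Finset.range i,
    (S.inner r + ((Finset.Ico (S.inner r) (S.outer r)).filter (fun c => S.entry r c ≤ j)).card)

/-- `Warr S i j` = W_{i+1,j}(S) = F_{i+1,j} + F_{i+1,j+1} − F_{i,j} − F_{i+2,j+1}
(the array (W_{i,j})_{i≥1,j≥0} encoded with the row index shifted down by one). -/
def Warr (S : SkewSSYT) (i j : ℕ) : ℤ :=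
  (Fcnt S (i+1) j : ℤ) + Fcnt S (i+1) (j+1) - Fcnt S i j - Fcnt S (i+2) (j+1)

/-- `SlideSpec S r S'` : `S'` is obtained from `S` by the jeu de taquin slide
starting from the inside corner of `S` in (0-indexed) row `r`.  `c` is the path
of the hole, `m` the number of moves. -/
def SlideSpec (S : SkewSSYT) (r : ℕ) (S' : SkewSSYT) : Prop :=
  1 ≤ S.inner r ∧ S.inner (r+1) < S.inner r ∧
  ∃ (m : ℕ) (c : ℕ → ℕ × ℕ),
    c 0 = (r, S.inner r - 1) ∧
    (∀ t, t < m →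
      (inSkew S ((c t).1 + 1, (c t).2) ∨ inSkew S ((c t).1, (c t).2 + 1)) ∧
      c (t+1) =
        if inSkew S ((c t).1, (c t).2 + 1) ∧
            (¬ inSkew S ((c t).1 + 1, (c t).2) ∨
              S.entry (c t).1 ((c t).2 + 1) < S.entry ((c t).1 + 1) (c t).2)
        then ((c t).1, (c t).2 + 1)
        else ((c t).1 + 1, (c t).2)) ∧
    ¬ inSkew S ((c m).1 + 1, (c m).2) ∧ ¬ inSkew S ((c m).1, (c m).2 + 1) ∧
    S'.inner = Function.update S.inner r (S.inner r - 1) ∧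
    S'.outer = Function.update S.outer (c m).1 (S.outer (c m).1 - 1) ∧
    (∀ t, t < m → S'.entry (c t).1 (c t).2 = S.entry (c (t+1)).1 (c (t+1)).2) ∧
    (∀ q : ℕ × ℕ, (∀ t, t ≤ m → c t ≠ q) → S'.entry q.1 q.2 = S.entry q.1 q.2)

/-- `RevSlideSpec S r S' b` : `S'` is obtained from `S` by the reverse slide
starting from the addable box at the end of (0-indexed) row `r` of the outer
shape, and the final position of the hole (the new inner box) is in
(1-indexed) row `b`. -/
def RevSlideSpec (S : SkewSSYT) (r : ℕ) (S' : SkewSSYT) (b : ℕ) : Prop :=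
  (∀ r', r = r' + 1 → S.outer (r'+1) < S.outer r') ∧
  ∃ (m : ℕ) (c : ℕ → ℕ × ℕ),
    c 0 = (r, S.outer r) ∧
    (∀ t, t < m →
      ((1 ≤ (c t).1 ∧ inSkew S ((c t).1 - 1, (c t).2)) ∨
       (1 ≤ (c t).2 ∧ inSkew S ((c t).1, (c t).2 - 1))) ∧
      c (t+1) =
        if (1 ≤ (c t).2 ∧ inSkew S ((c t).1, (c t).2 - 1)) ∧
            (¬ (1 ≤ (c t).1 ∧ inSkew S ((c t).1 - 1, (c t).2)) ∨
              S.entry ((c t).1 - 1) (c t).2 < S.entry (c t).1 ((c t).2 - 1))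
        then ((c t).1, (c t).2 - 1)
        else ((c t).1 - 1, (c t).2)) ∧
    ¬ (1 ≤ (c m).1 ∧ inSkew S ((c m).1 - 1, (c m).2)) ∧
    ¬ (1 ≤ (c m).2 ∧ inSkew S ((c m).1, (c m).2 - 1)) ∧
    S'.outer = Function.update S.outer r (S.outer r + 1) ∧
    S'.inner = Function.update S.inner (c m).1 (S.inner (c m).1 + 1) ∧
    (∀ t, t < m → S'.entry (c t).1 (c t).2 = S.entry (c (t+1)).1 (c (t+1)).2) ∧
    (∀ q : ℕ × ℕ, (∀ t, t ≤ m → c t ≠ q) → S'.entry q.1 q.2 = S.entry q.1 q.2) ∧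
    b = (c m).1 + 1

/-- `counted S p j c` : column `c` of row `p` is counted at level `j`. -/
def counted (S : SkewSSYT) (p j c : ℕ) : Prop :=
  c < S.inner p ∨ (c < S.outer p ∧ S.entry p c ≤ j)

instance (S : SkewSSYT) (p j c : ℕ) : Decidable (counted S p j c) := by
  unfold counted; infer_instance

/-- number of counted columns in row `p` at level `j`. -/
def rowcnt (S : SkewSSYT) (p j : ℕ) : ℕ :=
  ((Finset.range (S.outer p)).filter (fun c => counted S p j c)).card

lemma counted_lt_outer {S : SkewSSYT} {p j c : ℕ} (h : counted S p j c) :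
    c < S.outer p := by
  rcases h with h | h
  · exact lt_of_lt_of_le h (S.inner_le_outer p)
  · exact h.1

lemma row_weak_chain (S : SkewSSYT) {p c d : ℕ} (h1 : S.inner p ≤ c) (h2 : c ≤ d)
    (h3 : d < S.outer p) : S.entry p c ≤ S.entry p d := by
  induction d with
  | zero =>
    have : c = 0 := by omega
    subst this; exact le_rfl
  | succ d ih =>
    rcases Nat.lt_or_ge c (d+1) with h | h
    · have hd : d < S.outer p := by omega
      have h' : S.inner p ≤ d := by omega
      exact le_trans (ih (by omega) hd) (S.row_weak p d h' h3)
    · have : c = d + 1 := by omega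
      subst this; exact le_rfl

lemma counted_down {S : SkewSSYT} {p j c : ℕ} (h : counted S p j (c+1)) :
    counted S p j c := by
  rcases h with h | h
  · exact Or.inl (by omega)
  · rcases Nat.lt_or_ge c (S.inner p) with h' | h'
    · exact Or.inl h'
    · exact Or.inr ⟨by omega, le_trans (S.row_weak p c h' h.1) h.2⟩

lemma counted_le {S : SkewSSYT} {p j c d : ℕ} (h : counted S p j d) (hcd : c ≤ d) :
    counted S p j c := by
  induction d with
  | zero => have : c = 0 := by omega
            subst this; exact h
  | succ d ih =>
    rcases Nat.lt_or_ge c (d+1) with h' | h'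
    · exact ih (counted_down h) (by omega)
    · have : c = d + 1 := by omega
      subst this; exact h

lemma lt_rowcnt_iff {S : SkewSSYT} {p j c : ℕ} :
    c < rowcnt S p j ↔ counted S p j c := by
  constructor
  · intro h
    by_contra hc
    have hsub : (Finset.range (S.outer p)).filter (fun x => counted S p j x) ⊆
        Finset.range c := by
      intro x hx
      simp only [Finset.mem_filter, Finset.mem_range] at hx ⊢
      by_contra hxc
      exact hc (counted_le hx.2 (by omega))
    have := Finset.card_le_card hsub
    simp only [Finset.card_range] at this
    unfold rowcnt at h
    omega
  · intro h
    have hsub : Finset.range (c+1) ⊆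
        (Finset.range (S.outer p)).filter (fun x => counted S p j x) := by
      intro x hx
      simp only [Finset.mem_range] at hx
      have hcx : counted S p j x := counted_le h (by omega)
      simp only [Finset.mem_filter, Finset.mem_range]
      exact ⟨counted_lt_outer hcx, hcx⟩
    have := Finset.card_le_card hsub
    simp only [Finset.card_range] at this
    unfold rowcnt
    omega

lemma rowcnt_le_of {S S' : SkewSSYT} {p j p' j' : ℕ}
    (h : ∀ c, counted S p j c → counted S' p' j' c) :
    rowcnt S p j ≤ rowcnt S' p' j' := by
  rcases Nat.eq_zero_or_pos (rowcnt S p j) with h0 | h0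
  · omega
  · have : counted S p j (rowcnt S p j - 1) := lt_rowcnt_iff.mp (by omega)
    have := lt_rowcnt_iff.mpr (h _ this)
    omega

/-- concavity: each counted column of row `p+1` at level `j+1` is counted in
row `p` at level `j`. -/
lemma counted_step {S : SkewSSYT} {p j c : ℕ} (h : counted S (p+1) (j+1) c) :
    counted S p j c := by
  rcases h with h | h
  · exact Or.inl (lt_of_lt_of_le h (S.inner_anti p))
  · rcases Nat.lt_or_ge c (S.inner p) with h' | h'
    · exact Or.inl h'
    · refine Or.inr ⟨lt_of_lt_of_le h.1 (S.outer_anti p), ?_⟩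
      have := S.col_strict p c h' h.1
      omega

lemma rowcnt_concave (S : SkewSSYT) (p j : ℕ) :
    rowcnt S (p+1) (j+1) ≤ rowcnt S p j :=
  rowcnt_le_of (fun _ h => counted_step h)

lemma Fcnt_succ (S : SkewSSYT) (i j : ℕ) :
    Fcnt S (i+1) j = Fcnt S i j + rowcnt S i j := by
  unfold Fcnt
  rw [Finset.sum_range_succ]
  congr 1
  unfold rowcnt
  have hsplit : Finset.range (S.outer i) =
      Finset.range (S.inner i) ∪ Finset.Ico (S.inner i) (S.outer i) := by
    ext a
    simp only [Finset.mem_union, Finset.mem_range, Finset.mem_Ico]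
    have := S.inner_le_outer i
    omega
  rw [hsplit, Finset.filter_union, Finset.card_union_of_disjoint]
  · congr 1
    · rw [Finset.filter_true_of_mem, Finset.card_range]
      intro x hx
      simp only [Finset.mem_range] at hx
      exact Or.inl hx
    · congr 1
      apply Finset.filter_congr
      intro x hx
      simp only [Finset.mem_Ico] at hx
      unfold counted
      constructor
      · intro h
        exact Or.inr ⟨hx.2, h⟩
      · rintro (h | h)
        · omega
        · exact h.2
  · apply Finset.disjoint_filter_filter
    simp only [Finset.range_eq_Ico]
    exact Finset.Ico_disjoint_Ico_consecutive 0 (S.inner i) (S.outer i)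

/-- indicator of `counted`. -/
def ind (S : SkewSSYT) (p j c : ℕ) : ℕ := if counted S p j c then 1 else 0

lemma rowcnt_eq_sum (S : SkewSSYT) (p j N : ℕ) (hN : S.outer p ≤ N) :
    rowcnt S p j = ∑ q ∈ Finset.range N, ind S p j q := by
  unfold rowcnt ind
  rw [Finset.card_filter]
  apply Finset.sum_subset
  · exact Finset.range_subset_range.mpr hN
  · intro x _ hx
    simp only [Finset.mem_range, not_lt] at hx
    have : ¬ counted S p j x := fun h => by have := counted_lt_outer h; omega
    simp [this]

lemma sum_shift {N x y : ℕ} {g g' : ℕ → ℕ} (hxy : x ≤ y) (hyN : y < N)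
    (hlt : ∀ q, q < x → g' q = g q)
    (hmid : ∀ q, x ≤ q → q < y → g' q = g (q+1))
    (hgt : ∀ q, y < q → q < N → g' q = g q) :
    (∑ q ∈ Finset.range N, g' q) + g x = (∑ q ∈ Finset.range N, g q) + g' y := by
  have key : ∀ M, y < M → M ≤ N →
      (∑ q ∈ Finset.range M, g' q) + g x = (∑ q ∈ Finset.range M, g q) + g' y := by
    intro M
    induction M with
    | zero => omega
    | succ M ih =>
      intro hyM hMN
      rcases Nat.lt_or_ge y M with h | h
      · rw [Finset.sum_range_succ, Finset.sum_range_succ, hgt M h (by omega)]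
        have := ih h (by omega)
        omega
      · have hyM' : y = M := by omega
        subst hyM'
        -- sum over range (y+1) = sum over range x + sum over Ico x (y+1)
        have expand : ∀ h : ℕ → ℕ, ∑ q ∈ Finset.range (y+1), h q =
            (∑ q ∈ Finset.range x, h q) + ∑ q ∈ Finset.Ico x (y+1), h q := by
          intro h
          simp only [Finset.range_eq_Ico]
          exact (Finset.sum_Ico_consecutive h (Nat.zero_le x) (by omega)).symm
        rw [expand, expand]
        have e1 : ∑ q ∈ Finset.range x, g' q = ∑ q ∈ Finset.range x, g q :=
          Finset.sum_congr rfl (fun q hq => hlt q (Finset.mem_range.mp hq))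
        have e2 : ∑ q ∈ Finset.Ico x (y+1), g' q =
            (∑ q ∈ Finset.Ico x y, g (q+1)) + g' y := by
          rw [Finset.sum_Ico_succ_top hxy]
          congr 1
          apply Finset.sum_congr rfl
          intro q hq
          simp only [Finset.mem_Ico] at hq
          exact hmid q hq.1 hq.2
        have e3 : ∑ q ∈ Finset.Ico x (y+1), g q =
            g x + ∑ q ∈ Finset.Ico x y, g (q+1) := by
          rw [Finset.sum_Ico_eq_sum_range, Finset.sum_Ico_eq_sum_range]
          have hc : y + 1 - x = (y - x) + 1 := by omega
          rw [hc, Finset.sum_range_succ']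
          simp only [Nat.add_zero, Nat.add_assoc]
          omega
        rw [e1, e2, e3]
        ring
  exact key N hyN le_rfl
/-- times at which the hole is in row `p`. -/
def Tp (c : ℕ → ℕ × ℕ) (m p : ℕ) : Finset ℕ :=
  (Finset.range (m+1)).filter (fun t => (c t).1 = p)

/-- first time the hole is in row `p`. -/
def ta (c : ℕ → ℕ × ℕ) (m p : ℕ) : ℕ :=
  if h : (Tp c m p).Nonempty then (Tp c m p).min' h else 0

/-- last time the hole is in row `p`. -/
def tb (c : ℕ → ℕ × ℕ) (m p : ℕ) : ℕ :=
  if h : (Tp c m p).Nonempty then (Tp c m p).max' h else 0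

lemma mem_Tp {c : ℕ → ℕ × ℕ} {m p t : ℕ} :
    t ∈ Tp c m p ↔ t ≤ m ∧ (c t).1 = p := by
  simp [Tp, Nat.lt_succ_iff]

lemma ta_spec {c : ℕ → ℕ × ℕ} {m p : ℕ} (h : (Tp c m p).Nonempty) :
    ta c m p ≤ m ∧ (c (ta c m p)).1 = p := by
  rw [ta, dif_pos h]
  exact mem_Tp.mp ((Tp c m p).min'_mem h)

lemma tb_spec {c : ℕ → ℕ × ℕ} {m p : ℕ} (h : (Tp c m p).Nonempty) :
    tb c m p ≤ m ∧ (c (tb c m p)).1 = p := by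
  rw [tb, dif_pos h]
  exact mem_Tp.mp ((Tp c m p).max'_mem h)

lemma ta_min {c : ℕ → ℕ × ℕ} {m p : ℕ} (h : (Tp c m p).Nonempty) {t : ℕ}
    (ht : t ≤ m) (hct : (c t).1 = p) : ta c m p ≤ t := by
  rw [ta, dif_pos h]
  exact Finset.min'_le _ _ (mem_Tp.mpr ⟨ht, hct⟩)

lemma tb_max {c : ℕ → ℕ × ℕ} {m p : ℕ} (h : (Tp c m p).Nonempty) {t : ℕ}
    (ht : t ≤ m) (hct : (c t).1 = p) : t ≤ tb c m p := by
  rw [tb, dif_pos h]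
  exact Finset.le_max' _ _ (mem_Tp.mpr ⟨ht, hct⟩)

lemma ta_le_tb {c : ℕ → ℕ × ℕ} {m p : ℕ} (h : (Tp c m p).Nonempty) :
    ta c m p ≤ tb c m p :=
  ta_min h (tb_spec h).1 (tb_spec h).2
lemma slide_main {S S' : SkewSSYT} {r : ℕ} (hs : SlideSpec S r S') :
    ∃ (L : ℕ) (w : ℕ → ℕ), r ≤ L ∧
      (∀ i j, i ≤ r → Fcnt S' i j = Fcnt S i j) ∧
      (∀ i j, r < i → i ≤ L → Fcnt S' i j + 1 = Fcnt S i j + (if w i ≤ j then 1 else 0)) ∧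
      (∀ i j, L < i → Fcnt S' i j + 1 = Fcnt S i j) ∧
      (∀ i, r < i → i < L → w i < w (i+1)) ∧
      (∀ i j, r ≤ i → i < L → w (i+1) = j + 1 → rowcnt S (i+1) (j+1) = rowcnt S i j) ∧
      (∀ i j, r ≤ i → i ≤ L → (i = r ∨ w i ≤ j) → (i = L ∨ j + 2 ≤ w (i+1)) →
        rowcnt S (i+1) (j+1) < rowcnt S i j) := by
  obtain ⟨hinr, hcorner, m, c, hc0, hstep, hend1, hend2, hin', hout', hent1, hent2⟩ := hs
  have hrow0 : (c 0).1 = r := by rw [hc0]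
  have hcol0 : (c 0).2 = S.inner r - 1 := by rw [hc0]
  -- step dichotomy
  have hP1 : ∀ t, t < m →
      (c (t+1) = ((c t).1, (c t).2 + 1) ∧ inSkew S ((c t).1, (c t).2 + 1)) ∨
      (c (t+1) = ((c t).1 + 1, (c t).2) ∧ inSkew S ((c t).1 + 1, (c t).2)) := by
    intro t ht
    obtain ⟨hor, hnx⟩ := hstep t ht
    by_cases hcond : inSkew S ((c t).1, (c t).2 + 1) ∧
        (¬ inSkew S ((c t).1 + 1, (c t).2) ∨
          S.entry (c t).1 ((c t).2 + 1) < S.entry ((c t).1 + 1) (c t).2)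
    · rw [if_pos hcond] at hnx
      exact Or.inl ⟨hnx, hcond.1⟩
    · rw [if_neg hcond] at hnx
      refine Or.inr ⟨hnx, ?_⟩
      rcases hor with h | h
      · exact h
      · by_contra hB
        exact hcond ⟨h, Or.inl hB⟩
  have hPright : ∀ t, t < m → (c (t+1)).1 = (c t).1 →
      c (t+1) = ((c t).1, (c t).2 + 1) ∧ inSkew S ((c t).1, (c t).2 + 1) ∧
      (inSkew S ((c t).1 + 1, (c t).2) →
        S.entry (c t).1 ((c t).2 + 1) < S.entry ((c t).1 + 1) (c t).2) := by
    intro t ht hr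
    rcases hP1 t ht with ⟨h1, h2⟩ | ⟨h1, h2⟩
    · refine ⟨h1, h2, ?_⟩
      intro hB
      obtain ⟨hor, hnx⟩ := hstep t ht
      by_cases hcond : inSkew S ((c t).1, (c t).2 + 1) ∧
          (¬ inSkew S ((c t).1 + 1, (c t).2) ∨
            S.entry (c t).1 ((c t).2 + 1) < S.entry ((c t).1 + 1) (c t).2)
      · rcases hcond.2 with h | h
        · exact absurd hB h
        · exact h
      · rw [if_neg hcond] at hnx
        rw [hnx] at hr
        simp at hr
    · rw [h1] at hr
      simp at hr
  have hPdown : ∀ t, t < m → (c (t+1)).1 ≠ (c t).1 →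
      c (t+1) = ((c t).1 + 1, (c t).2) ∧ inSkew S ((c t).1 + 1, (c t).2) ∧
      (inSkew S ((c t).1, (c t).2 + 1) →
        S.entry ((c t).1 + 1) (c t).2 ≤ S.entry (c t).1 ((c t).2 + 1)) := by
    intro t ht hr
    rcases hP1 t ht with ⟨h1, h2⟩ | ⟨h1, h2⟩
    · rw [h1] at hr
      simp at hr
    · refine ⟨h1, h2, ?_⟩
      intro hR
      obtain ⟨hor, hnx⟩ := hstep t ht
      by_contra hlt
      rw [if_pos ⟨hR, Or.inr (by omega)⟩] at hnx
      rw [h1] at hnx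
      have := congrArg Prod.fst hnx
      simp at this
  -- monotonicity
  have hrow_mono : ∀ s t, s ≤ t → t ≤ m → (c s).1 ≤ (c t).1 := by
    intro s t hst htm
    induction t with
    | zero =>
      have : s = 0 := by omega
      subst this; exact le_rfl
    | succ t ih =>
      rcases Nat.lt_or_ge s (t+1) with h | h
      · have h2 := ih (by omega) (by omega)
        rcases hP1 t (by omega) with ⟨hh, _⟩ | ⟨hh, _⟩ <;> rw [hh] <;> simp <;> omega
      · have : s = t + 1 := by omega
        subst this; exact le_rfl
  have hcol_mono : ∀ s t, s ≤ t → t ≤ m → (c s).2 ≤ (c t).2 := by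
    intro s t hst htm
    induction t with
    | zero =>
      have : s = 0 := by omega
      subst this; exact le_rfl
    | succ t ih =>
      rcases Nat.lt_or_ge s (t+1) with h | h
      · have h2 := ih (by omega) (by omega)
        rcases hP1 t (by omega) with ⟨hh, _⟩ | ⟨hh, _⟩ <;> rw [hh] <;> simp <;> omega
      · have : s = t + 1 := by omega
        subst this; exact le_rfl
  set L := (c m).1 with hLdef
  have hrL : r ≤ L := by
    have := hrow_mono 0 m (by omega) le_rfl
    omega
  have hrowrange : ∀ t, t ≤ m → r ≤ (c t).1 ∧ (c t).1 ≤ L := by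
    intro t ht
    constructor
    · have := hrow_mono 0 t (by omega) ht; omega
    · exact hrow_mono t m ht le_rfl
  have hskew : ∀ t, 1 ≤ t → t ≤ m →
      S.inner (c t).1 ≤ (c t).2 ∧ (c t).2 < S.outer (c t).1 := by
    intro t h1 h2
    obtain ⟨t, rfl⟩ : ∃ t', t = t' + 1 := ⟨t - 1, by omega⟩
    rcases hP1 t (by omega) with ⟨hh, hsk⟩ | ⟨hh, hsk⟩ <;> rw [hh] <;> exact hsk
  have hIVT : ∀ t, t ≤ m → ∀ p, r ≤ p → p ≤ (c t).1 → ∃ s, s ≤ t ∧ (c s).1 = p := by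
    intro t
    induction t with
    | zero =>
      intro _ p h1 h2
      exact ⟨0, le_rfl, by omega⟩
    | succ t ih =>
      intro ht p h1 h2
      rcases le_or_gt p (c t).1 with h | h
      · obtain ⟨s, hs1, hs2⟩ := ih (by omega) p h1 h
        exact ⟨s, by omega, hs2⟩
      · have hstep1 : (c (t+1)).1 ≤ (c t).1 + 1 := by
          rcases hP1 t (by omega) with ⟨hh, _⟩ | ⟨hh, _⟩ <;> rw [hh] <;> simp
        exact ⟨t+1, le_rfl, by omega⟩
  have hTne : ∀ p, r ≤ p → p ≤ L → (Tp c m p).Nonempty := by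
    intro p h1 h2
    obtain ⟨s, hs1, hs2⟩ := hIVT m le_rfl p h1 (by omega)
    exact ⟨s, mem_Tp.mpr ⟨hs1, hs2⟩⟩
  have hbetween : ∀ p, r ≤ p → p ≤ L → ∀ t, ta c m p ≤ t → t ≤ tb c m p → (c t).1 = p := by
    intro p h1 h2 t h3 h4
    have hne := hTne p h1 h2
    have g1 := hrow_mono (ta c m p) t h3 (le_trans h4 (tb_spec hne).1)
    have g2 := hrow_mono t (tb c m p) h4 (tb_spec hne).1
    have e1 := (ta_spec hne).2
    have e2 := (tb_spec hne).2
    omega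
  have hcollin : ∀ p, r ≤ p → p ≤ L → ∀ t, ta c m p ≤ t → t ≤ tb c m p →
      (c t).2 = (c (ta c m p)).2 + (t - ta c m p) := by
    intro p h1 h2 t
    induction t with
    | zero =>
      intro h3 h4
      have : ta c m p = 0 := by omega
      rw [this]; simp
    | succ t ih =>
      intro h3 h4
      rcases le_or_gt (ta c m p) t with h | h
      · have hct2 := ih h (by omega)
        have hne := hTne p h1 h2
        have hrt : (c t).1 = p := hbetween p h1 h2 t h (by omega)
        have hrt1 : (c (t+1)).1 = p := hbetween p h1 h2 (t+1) (by omega) h4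
        have hm : t < m := by
          have := (tb_spec hne).1; omega
        have hh := (hPright t hm (by rw [hrt, hrt1])).1
        rw [hh]; simp; omega
      · have : ta c m p = t + 1 := by omega
        rw [this]; simp
  have ha0 : ta c m r = 0 := by
    have hne := hTne r le_rfl hrL
    have := ta_min hne (by omega : (0:ℕ) ≤ m) hrow0
    omega
  have hbL : tb c m L = m := by
    have hne := hTne L hrL le_rfl
    have h1 := tb_max hne le_rfl hLdef.symm
    have h2 := (tb_spec hne).1
    omega
  have hta_pos : ∀ p, r < p → p ≤ L → 1 ≤ ta c m p := by
    intro p h1 h2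
    have hne := hTne p (by omega) h2
    rcases Nat.eq_zero_or_pos (ta c m p) with h | h
    · exfalso
      have := (ta_spec hne).2
      rw [h, hrow0] at this
      omega
    · exact h
  have hx : ∀ p, r ≤ p → p ≤ L →
      ((p = r ∧ (c (ta c m p)).2 + 1 = S.inner p) ∨
        (p ≠ r ∧ S.inner p ≤ (c (ta c m p)).2)) ∧
      (c (ta c m p)).2 < S.outer p := by
    intro p hp1 hp2
    by_cases hpr : p = r
    · subst hpr
      rw [ha0, hcol0]
      have := S.inner_le_outer p
      exact ⟨Or.inl ⟨rfl, by omega⟩, by omega⟩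
    · have hne := hTne p hp1 hp2
      have ha1 : 1 ≤ ta c m p := hta_pos p (by omega) hp2
      have hsk := hskew (ta c m p) ha1 (ta_spec hne).1
      rw [(ta_spec hne).2] at hsk
      exact ⟨Or.inr ⟨hpr, hsk.1⟩, hsk.2⟩
  have hyout : ∀ p, r ≤ p → p ≤ L →
      (c (tb c m p)).2 < S.outer p ∧ S.inner p ≤ (c (tb c m p)).2 + 1 := by
    intro p hp1 hp2
    have hne := hTne p hp1 hp2
    rcases Nat.eq_zero_or_pos (tb c m p) with h | h
    · have hpr : p = r := by
        have := (tb_spec hne).2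
        rw [h, hrow0] at this
        omega
      subst hpr
      rw [h, hcol0]
      have := S.inner_le_outer p
      constructor <;> omega
    · have hsk := hskew (tb c m p) h (tb_spec hne).1
      rw [(tb_spec hne).2] at hsk
      constructor <;> omega
  have houtL : S.outer L = (c m).2 + 1 := by
    have h := hyout L hrL le_rfl
    rw [hbL] at h
    have h2 : ¬ (S.inner L ≤ (c m).2 + 1 ∧ (c m).2 + 1 < S.outer L) := hend2
    omega
  -- next-row structure
  have hnext : ∀ p, r ≤ p → p < L →
      tb c m p < m ∧ c (tb c m p + 1) = (p+1, (c (tb c m p)).2) ∧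
      ta c m (p+1) = tb c m p + 1 ∧
      (S.inner (p+1) ≤ (c (tb c m p)).2 ∧ (c (tb c m p)).2 < S.outer (p+1)) ∧
      (inSkew S (p, (c (tb c m p)).2 + 1) →
        S.entry (p+1) ((c (tb c m p)).2) ≤ S.entry p ((c (tb c m p)).2 + 1)) := by
    intro p hp1 hp2
    have hne := hTne p hp1 (by omega)
    have hbm : tb c m p < m := by
      have h1 := (tb_spec hne).1
      have h2 := (tb_spec hne).2
      rcases Nat.lt_or_ge (tb c m p) m with h | h
      · exact h
      · exfalso
        have : tb c m p = m := by omega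
        rw [this] at h2
        omega
    have hner : (c (tb c m p + 1)).1 ≠ (c (tb c m p)).1 := by
      intro heq
      have := tb_max hne (by omega : tb c m p + 1 ≤ m)
        (by rw [heq, (tb_spec hne).2])
      omega
    obtain ⟨hd1, hd2, hd3⟩ := hPdown (tb c m p) hbm hner
    rw [(tb_spec hne).2] at hd1 hd2 hd3
    have hne1 : (Tp c m (p+1)).Nonempty := hTne (p+1) (by omega) (by omega)
    have hta1 : ta c m (p+1) = tb c m p + 1 := by
      have hle := ta_min hne1 (by omega : tb c m p + 1 ≤ m) (by rw [hd1])
      have hge : tb c m p + 1 ≤ ta c m (p+1) := by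
        by_contra hcon
        push_neg at hcon
        have := hrow_mono (ta c m (p+1)) (tb c m p) (by omega) (by omega)
        rw [(ta_spec hne1).2, (tb_spec hne).2] at this
        omega
      omega
    exact ⟨hbm, hd1, hta1, hd2, hd3⟩
  set w : ℕ → ℕ := fun p => S.entry p ((c (ta c m p)).2) with hwdef
  have hwval : ∀ p, w p = S.entry p ((c (ta c m p)).2) := fun p => rfl
  have hwnext : ∀ p, r ≤ p → p < L → w (p+1) = S.entry (p+1) ((c (tb c m p)).2) := by
    intro p h1 h2
    obtain ⟨_, hc1, hc2, _, _⟩ := hnext p h1 h2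
    rw [hwval, hc2, hc1]
  have hinner'p : ∀ p, S'.inner p = if p = r then S.inner r - 1 else S.inner p := by
    intro p
    rw [hin', Function.update_apply]
  have houter'p : ∀ p, S'.outer p = if p = L then S.outer L - 1 else S.outer p := by
    intro p
    rw [hout', Function.update_apply]
  have hnotpath : ∀ p q,
      ((r ≤ p ∧ p ≤ L) → q < (c (ta c m p)).2 ∨ (c (tb c m p)).2 < q) →
      S'.entry p q = S.entry p q := by
    intro p q h
    apply hent2 (p, q)
    intro t ht hct
    have h1 : (c t).1 = p := by rw [hct]
    have hp : r ≤ p ∧ p ≤ L := h1 ▸ hrowrange t ht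
    have hne := hTne p hp.1 hp.2
    have h2 := ta_min hne ht h1
    have h3 := tb_max hne ht h1
    have g1 := hcol_mono (ta c m p) t h2 ht
    have g2 := hcol_mono t (tb c m p) h3 (tb_spec hne).1
    have hq : (c t).2 = q := by rw [hct]
    rcases h hp with h | h <;> omega
  have huntouched : ∀ p j, p < r ∨ L < p → rowcnt S' p j = rowcnt S p j := by
    intro p j hp
    have hnp : ¬(r ≤ p ∧ p ≤ L) := by omega
    have hE : ∀ q, S'.entry p q = S.entry p q :=
      fun q => hnotpath p q (fun hp' => absurd hp' hnp)
    have hI : S'.inner p = S.inner p := by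
      rw [hinner'p, if_neg (by omega)]
    have hO : S'.outer p = S.outer p := by
      rw [houter'p, if_neg (by omega)]
    apply le_antisymm
    · apply rowcnt_le_of
      intro cc hcc
      unfold counted at hcc ⊢
      rw [hI, hO, hE] at hcc
      exact hcc
    · apply rowcnt_le_of
      intro cc hcc
      unfold counted at hcc ⊢
      rw [hI, hO, hE]
      exact hcc
  -- the central per-row computation
  have hrowkey : ∀ p j, r ≤ p → p ≤ L →
      rowcnt S' p j + ind S p j ((c (ta c m p)).2) =
      rowcnt S p j + ind S' p j ((c (tb c m p)).2) := by
    intro p j hp1 hp2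
    have hne := hTne p hp1 hp2
    have hab : ta c m p ≤ tb c m p := ta_le_tb hne
    have hxy : (c (ta c m p)).2 ≤ (c (tb c m p)).2 :=
      hcol_mono _ _ hab (tb_spec hne).1
    have hxf := hx p hp1 hp2
    have hyf := hyout p hp1 hp2
    have hIval : (p = r ∧ S'.inner p = (c (ta c m p)).2 ∧
          (c (ta c m p)).2 + 1 = S.inner p) ∨
        (p ≠ r ∧ S'.inner p = S.inner p ∧ S.inner p ≤ (c (ta c m p)).2) := by
      rcases hxf.1 with ⟨h1, h2⟩ | ⟨h1, h2⟩
      · left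
        refine ⟨h1, ?_, h2⟩
        rw [hinner'p, if_pos h1, ← h1]
        omega
      · right
        exact ⟨h1, by rw [hinner'p, if_neg h1], h2⟩
    have hOval : (p = L ∧ S'.outer p = (c (tb c m p)).2 ∧
          S.outer p = (c (tb c m p)).2 + 1) ∨
        (p ≠ L ∧ S'.outer p = S.outer p ∧ (c (tb c m p)).2 < S.outer p) := by
      by_cases hpL : p = L
      · left
        subst hpL
        rw [hbL]
        refine ⟨rfl, ?_, houtL⟩
        rw [houter'p, if_pos rfl, houtL]
        omega
      · right
        exact ⟨hpL, by rw [houter'p, if_neg hpL], hyf.1⟩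
    rw [rowcnt_eq_sum S p j (S.outer p) le_rfl,
        rowcnt_eq_sum S' p j (S.outer p)
          (by rcases hOval with ⟨h1, h2, h3⟩ | ⟨h1, h2, h3⟩ <;> omega)]
    apply sum_shift hxy
      (by rcases hOval with ⟨h1, h2, h3⟩ | ⟨h1, h2, h3⟩ <;> omega)
    · -- q < x
      intro q hq
      have hE : S'.entry p q = S.entry p q := hnotpath p q (fun _ => Or.inl hq)
      have hiff : counted S' p j q ↔ counted S p j q := by
        unfold counted
        rw [hE]
        rcases hIval with ⟨h1, h2, h3⟩ | ⟨h1, h2, h3⟩ <;>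
          rcases hOval with ⟨g1, g2, g3⟩ | ⟨g1, g2, g3⟩ <;> omega
      unfold ind
      simp only [hiff]
    · -- x ≤ q < y
      intro q hq1 hq2
      have hylin := hcollin p hp1 hp2 (tb c m p) hab le_rfl
      set t := ta c m p + (q - (c (ta c m p)).2) with htdef
      have ht1 : ta c m p ≤ t := by omega
      have ht2 : t < tb c m p := by omega
      have hrowt : (c t).1 = p := hbetween p hp1 hp2 t ht1 (by omega)
      have hrowt1 : (c (t+1)).1 = p := hbetween p hp1 hp2 (t+1) (by omega) (by omega)
      have hcolt : (c t).2 = q := by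
        have := hcollin p hp1 hp2 t ht1 (by omega)
        omega
      have htm : t < m := by
        have := (tb_spec hne).1; omega
      have hstepr := hPright t htm (by rw [hrowt, hrowt1])
      have hE : S'.entry p q = S.entry p (q+1) := by
        have h := hent1 t htm
        rw [hstepr.1] at h
        rw [hrowt, hcolt] at h
        exact h
      have hiff : counted S' p j q ↔ counted S p j (q+1) := by
        unfold counted
        rw [hE]
        rcases hIval with ⟨h1, h2, h3⟩ | ⟨h1, h2, h3⟩ <;>
          rcases hOval with ⟨g1, g2, g3⟩ | ⟨g1, g2, g3⟩ <;> omega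
      unfold ind
      simp only [hiff]
    · -- y < q
      intro q hq1 hq2
      have hE : S'.entry p q = S.entry p q := hnotpath p q (fun _ => Or.inr hq1)
      have hiff : counted S' p j q ↔ counted S p j q := by
        unfold counted
        rw [hE]
        rcases hIval with ⟨h1, h2, h3⟩ | ⟨h1, h2, h3⟩ <;>
          rcases hOval with ⟨g1, g2, g3⟩ | ⟨g1, g2, g3⟩ <;> omega
      unfold ind
      simp only [hiff]
  -- evaluation of the two boundary indicators
  have hUval : ∀ p j, r ≤ p → p ≤ L →
      ind S p j ((c (ta c m p)).2) =
        if p = r then 1 else (if w p ≤ j then 1 else 0) := by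
    intro p j hp1 hp2
    have hxf := hx p hp1 hp2
    rcases hxf.1 with ⟨h1, h2⟩ | ⟨h1, h2⟩
    · rw [if_pos h1]
      have hc : counted S p j ((c (ta c m p)).2) := Or.inl (by omega)
      unfold ind
      rw [if_pos hc]
    · rw [if_neg h1, hwval]
      have hiff : counted S p j ((c (ta c m p)).2) ↔
          S.entry p ((c (ta c m p)).2) ≤ j := by
        unfold counted
        constructor
        · rintro (h | ⟨h3, h4⟩)
          · omega
          · exact h4
        · intro h
          exact Or.inr ⟨hxf.2, h⟩
      unfold ind
      simp only [hiff]
  have hVvalL : ∀ j, ind S' L j ((c (tb c m L)).2) = 0 := by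
    intro j
    rw [hbL]
    have hinn : S'.inner L ≤ (c m).2 := by
      rw [hinner'p]
      by_cases hLr : L = r
      · rw [if_pos hLr]
        have := hcol_mono 0 m (by omega) le_rfl
        rw [hcol0] at this
        omega
      · rw [if_neg hLr]
        have h1 := hyout L hrL le_rfl
        rw [hbL] at h1
        have hm1 : 1 ≤ m := by
          rcases Nat.eq_zero_or_pos m with h | h
          · exfalso; rw [hLdef, h, hrow0] at hLr; exact hLr rfl
          · exact h
        have := (hskew m hm1 le_rfl).1
        rw [← hLdef] at this
        exact this
    have hout : S'.outer L = (c m).2 := by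
      rw [houter'p, if_pos rfl, houtL]
      omega
    have hnc : ¬ counted S' L j ((c m).2) := by
      unfold counted
      rintro (h | ⟨h1, h2⟩)
      · omega
      · omega
    unfold ind
    simp only [hnc]
    rfl
  have hVval : ∀ p j, r ≤ p → p < L →
      ind S' p j ((c (tb c m p)).2) = if w (p+1) ≤ j then 1 else 0 := by
    intro p j hp1 hp2
    obtain ⟨hbm, hc1, hc2, hsk1, _⟩ := hnext p hp1 hp2
    have hE : S'.entry p ((c (tb c m p)).2) = S.entry (p+1) ((c (tb c m p)).2) := by
      have hne := hTne p hp1 (by omega)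
      have h := hent1 (tb c m p) hbm
      rw [hc1, (tb_spec hne).2] at h
      exact h
    have hinn : S'.inner p ≤ (c (tb c m p)).2 := by
      have hxf := hx p hp1 (by omega)
      have hne := hTne p hp1 (by omega)
      have hxy : (c (ta c m p)).2 ≤ (c (tb c m p)).2 :=
        hcol_mono _ _ (ta_le_tb hne) (tb_spec hne).1
      rw [hinner'p]
      rcases hxf.1 with ⟨h1, h2⟩ | ⟨h1, h2⟩
      · rw [if_pos h1, ← h1]; omega
      · rw [if_neg h1]; omega
    have hout : (c (tb c m p)).2 < S'.outer p := by
      rw [houter'p, if_neg (by omega)]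
      exact (hyout p hp1 (by omega)).1
    rw [hwnext p hp1 hp2]
    have hiff : counted S' p j ((c (tb c m p)).2) ↔
        S.entry (p+1) ((c (tb c m p)).2) ≤ j := by
      unfold counted
      rw [hE]
      constructor
      · rintro (h | ⟨hh1, hh2⟩)
        · omega
        · exact hh2
      · intro h
        exact Or.inr ⟨hout, h⟩
    unfold ind
    simp only [hiff]
  have hrowfinal : ∀ p j, r ≤ p → p ≤ L →
      rowcnt S' p j + (if p = r then 1 else (if w p ≤ j then 1 else 0)) =
      rowcnt S p j + (if p = L then 0 else (if w (p+1) ≤ j then 1 else 0)) := by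
    intro p j h1 h2
    have hk := hrowkey p j h1 h2
    rw [hUval p j h1 h2] at hk
    by_cases hpL : p = L
    · rw [if_pos hpL]
      rw [show ind S' p j ((c (tb c m p)).2) = 0 by rw [hpL]; exact hVvalL j] at hk
      omega
    · rw [if_neg hpL]
      rw [hVval p j h1 (by omega)] at hk
      omega
  -- prefix-sum versions
  have E0 : ∀ i j, i ≤ r → Fcnt S' i j = Fcnt S i j := by
    intro i
    induction i with
    | zero => intro j _; simp [Fcnt]
    | succ i ih =>
      intro j hi
      rw [Fcnt_succ, Fcnt_succ, ih j (by omega), huntouched i j (Or.inl (by omega))]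
  have E1 : ∀ i j, r < i → i ≤ L →
      Fcnt S' i j + 1 = Fcnt S i j + (if w i ≤ j then 1 else 0) := by
    intro i
    induction i with
    | zero => intro j h1 _; omega
    | succ i ih =>
      intro j h1 h2
      rcases Nat.lt_or_ge r i with h | h
      · have hih := ih j h (by omega)
        have hrf := hrowfinal i j (by omega) (by omega)
        rw [if_neg (by omega : ¬ i = r), if_neg (by omega : ¬ i = L)] at hrf
        rw [Fcnt_succ, Fcnt_succ]
        by_cases ha : w i ≤ j <;> by_cases hb : w (i+1) ≤ j <;>
          simp only [if_pos, if_neg, ha, hb, ite_true, ite_false] at hih hrf ⊢ <;> omega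
      · have hir : i = r := by omega
        subst hir
        have hrf := hrowfinal i j le_rfl (by omega)
        rw [if_pos rfl, if_neg (by omega : ¬ i = L)] at hrf
        have h0 := E0 i j le_rfl
        rw [Fcnt_succ, Fcnt_succ]
        by_cases hb : w (i+1) ≤ j <;>
          simp only [if_pos, if_neg, hb, ite_true, ite_false] at hrf ⊢ <;> omega
  have E2 : ∀ i j, L < i → Fcnt S' i j + 1 = Fcnt S i j := by
    intro i
    induction i with
    | zero => intro j h; omega
    | succ i ih =>
      intro j hi
      rcases Nat.lt_or_ge L i with h | h
      · rw [Fcnt_succ, Fcnt_succ, huntouched i j (Or.inr h)]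
        have := ih j h
        omega
      · have hiL : i = L := by omega
        subst hiL
        rw [Fcnt_succ, Fcnt_succ]
        have hrf := hrowfinal L j hrL le_rfl
        rw [if_pos rfl] at hrf
        rcases Nat.lt_or_ge r L with h' | h'
        · rw [if_neg (by omega : ¬ L = r)] at hrf
          have hE1 := E1 L j h' le_rfl
          by_cases hw' : w L ≤ j <;>
            simp only [if_pos, if_neg, hw', ite_true, ite_false] at hrf hE1 <;> omega
        · have hir : L = r := by omega
          rw [if_pos hir] at hrf
          have h0 := E0 L j (by omega)
          omega
  -- the three structural facts about w
  have F1 : ∀ i, r < i → i < L → w i < w (i+1) := by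
    intro i h1 h2
    obtain ⟨hbm, hc1, hc2, hsk, hrule⟩ := hnext i (by omega) h2
    rw [hwnext i (by omega) h2, hwval]
    have hne := hTne i (by omega) (by omega)
    have hxy : (c (ta c m i)).2 ≤ (c (tb c m i)).2 :=
      hcol_mono _ _ (ta_le_tb hne) (tb_spec hne).1
    rcases hx i (by omega) (by omega) with ⟨⟨hir, _⟩ | ⟨_, hxin⟩, hxout⟩
    · omega
    · have hyouti : (c (tb c m i)).2 < S.outer i :=
        lt_of_lt_of_le hsk.2 (S.outer_anti i)
      calc S.entry i (c (ta c m i)).2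
          ≤ S.entry i (c (tb c m i)).2 := row_weak_chain S hxin hxy hyouti
        _ < S.entry (i+1) (c (tb c m i)).2 :=
            S.col_strict i _ (le_trans hxin hxy) hsk.2
  have F2 : ∀ i j, r ≤ i → i < L → w (i+1) = j + 1 →
      rowcnt S (i+1) (j+1) = rowcnt S i j := by
    intro i j h1 h2 hwj
    rw [hwnext i h1 h2] at hwj
    obtain ⟨hbm, hc1, hc2, hsk, hrule⟩ := hnext i h1 h2
    have hne := hTne i h1 (by omega)
    have hxy : (c (ta c m i)).2 ≤ (c (tb c m i)).2 :=
      hcol_mono _ _ (ta_le_tb hne) (tb_spec hne).1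
    have hxf := hx i h1 (by omega)
    have hinx : S.inner i ≤ (c (ta c m i)).2 + 1 := by
      rcases hxf.1 with ⟨_, h⟩ | ⟨_, h⟩ <;> omega
    apply le_antisymm
    · exact rowcnt_le_of (fun _ h => counted_step h)
    · apply rowcnt_le_of
      intro cc hcc
      rcases le_or_gt cc (c (tb c m i)).2 with h | h
      · rcases Nat.lt_or_ge cc (S.inner (i+1)) with h' | h'
        · exact Or.inl h'
        · refine Or.inr ⟨by omega, ?_⟩
          calc S.entry (i+1) cc
              ≤ S.entry (i+1) (c (tb c m i)).2 := row_weak_chain S h' h hsk.2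
            _ = j + 1 := hwj
      · exfalso
        rcases hcc with h' | ⟨h'1, h'2⟩
        · omega
        · by_cases hR : inSkew S (i, (c (tb c m i)).2 + 1)
          · have hru := hrule hR
            have hRin : S.inner i ≤ (c (tb c m i)).2 + 1 := hR.1
            have hch : S.entry i ((c (tb c m i)).2 + 1) ≤ S.entry i cc :=
              row_weak_chain S hRin (by omega) h'1
            omega
          · have hoR : S.outer i ≤ (c (tb c m i)).2 + 1 := by
              by_contra hcon
              apply hR
              constructor
              · show S.inner i ≤ (c (tb c m i)).2 + 1
                omega
              · show (c (tb c m i)).2 + 1 < S.outer i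
                omega
            omega
  have F3 : ∀ i j, r ≤ i → i ≤ L → (i = r ∨ w i ≤ j) → (i = L ∨ j + 2 ≤ w (i+1)) →
      rowcnt S (i+1) (j+1) < rowcnt S i j := by
    intro i j h1 h2 h3 h4
    suffices hsf : counted S i j (rowcnt S (i+1) (j+1)) by
      have := lt_rowcnt_iff.mpr hsf
      omega
    set k := rowcnt S (i+1) (j+1) with hkdef
    have hxf := hx i h1 h2
    have hcx : counted S i j ((c (ta c m i)).2) := by
      rcases hxf.1 with ⟨hir, hxi⟩ | ⟨hir, hxi⟩
      · exact Or.inl (by omega)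
      · rcases h3 with h | h
        · exact absurd h hir
        · rw [hwval] at h
          exact Or.inr ⟨hxf.2, h⟩
    rcases le_or_gt k ((c (ta c m i)).2) with hkx | hkx
    · exact counted_le hcx hkx
    · have hcstar : counted S (i+1) (j+1) (k-1) := lt_rowcnt_iff.mp (by omega)
      have hin1x : S.inner (i+1) ≤ (c (ta c m i)).2 := by
        rcases hxf.1 with ⟨hir, hxi⟩ | ⟨hir, hxi⟩
        · have hcor := hcorner
          rw [← hir] at hcor
          omega
        · exact le_trans (S.inner_anti i) hxi
      obtain ⟨hcout, hcent⟩ : (k-1) < S.outer (i+1) ∧ S.entry (i+1) (k-1) ≤ j+1 := by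
        rcases hcstar with h | h
        · exact absurd h (by omega)
        · exact h
      have hne := hTne i h1 h2
      have hxy : (c (ta c m i)).2 ≤ (c (tb c m i)).2 :=
        hcol_mono _ _ (ta_le_tb hne) (tb_spec hne).1
      -- k - 1 < y
      have hky : k - 1 < (c (tb c m i)).2 := by
        by_cases hiL : i = L
        · subst hiL
          by_contra hcon
          push_neg at hcon
          rw [hbL] at hcon hxy
          apply hend1
          refine ⟨?_, ?_⟩
          · show S.inner (L+1) ≤ (c m).2
            omega
          · show (c m).2 < S.outer (L+1)
            omega
        · have hiL' : i < L := by omega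
          have hw4 : j + 2 ≤ w (i+1) := by
            rcases h4 with h | h
            · exact absurd h hiL
            · exact h
          rw [hwnext i h1 hiL'] at hw4
          obtain ⟨_, _, _, hsk, _⟩ := hnext i h1 hiL'
          by_contra hcon
          push_neg at hcon
          have := row_weak_chain S hsk.1 hcon hcout
          omega
      -- the hole moved right from column k-1 in row i
      have hylin := hcollin i h1 h2 (tb c m i) (ta_le_tb hne) le_rfl
      set t := ta c m i + (k - 1 - (c (ta c m i)).2) with htdef
      have ht1 : ta c m i ≤ t := by omega
      have ht2 : t < tb c m i := by omega
      have hrowt : (c t).1 = i := hbetween i h1 h2 t ht1 (by omega)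
      have hrowt1 : (c (t+1)).1 = i := hbetween i h1 h2 (t+1) (by omega) (by omega)
      have hcolt : (c t).2 = k - 1 := by
        have := hcollin i h1 h2 t ht1 (by omega)
        omega
      have htm : t < m := by
        have := (tb_spec hne).1; omega
      have hstepr := hPright t htm (by rw [hrowt, hrowt1])
      have hsks : inSkew S (i, k - 1 + 1) := by
        have h := hstepr.2.1
        rw [hrowt, hcolt] at h
        exact h
      have hltE : S.entry i (k-1+1) < S.entry (i+1) (k-1) := by
        have h := hstepr.2.2
        rw [hrowt, hcolt] at h
        apply h
        constructor
        · show S.inner (i+1) ≤ k - 1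
          omega
        · show k - 1 < S.outer (i+1)
          omega
      have hkk : k - 1 + 1 = k := by omega
      rw [hkk] at hsks hltE
      exact Or.inr ⟨hsks.2, by omega⟩
  exact ⟨L, w, hrL, E0, E1, E2, F1, F2, F3⟩
/- STATEMENT 5: if each S^{t+1} is obtained from S^t by a jeu de taquin slide,
then the counting functions F^t_{i,j} = Fcnt (S t) i j satisfy the tropical KP
equation for all i ≥ 1 (encoded as i+1), j ≥ 0 and 0 ≤ t ≤ T−1. -/
theorem jdt_slides_satisfy_tropical_KP (T : ℕ) (S : ℕ → SkewSSYT)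
    (hslides : ∀ t, t < T → ∃ r, SlideSpec (S t) r (S (t+1))) :
    ∀ t, t < T → ∀ i j,
      Fcnt (S t) (i+1) j + Fcnt (S (t+1)) (i+1) (j+1) =
        max (Fcnt (S t) (i+2) (j+1) + Fcnt (S (t+1)) i j)
            (Fcnt (S t) (i+1) (j+1) + Fcnt (S (t+1)) (i+1) j) := by
  intro t ht i j
  obtain ⟨r, hs⟩ := hslides t ht
  obtain ⟨L, w, hrL, E0, E1, E2, F1, F2, F3⟩ := slide_main hs
  have hcc : rowcnt (S t) (i+1) (j+1) ≤ rowcnt (S t) i j := rowcnt_concave _ _ _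
  have hs1 : Fcnt (S t) (i+2) (j+1) = Fcnt (S t) (i+1) (j+1) + rowcnt (S t) (i+1) (j+1) :=
    Fcnt_succ _ _ _
  have hs2 : Fcnt (S t) (i+1) j = Fcnt (S t) i j + rowcnt (S t) i j := Fcnt_succ _ _ _
  by_cases h1 : i + 1 ≤ r
  · have e1 := E0 (i+1) (j+1) h1
    have e2 := E0 (i+1) j h1
    have e3 := E0 i j (by omega)
    omega
  · push_neg at h1
    by_cases h2 : i + 1 ≤ L
    · have e1 := E1 (i+1) (j+1) (by omega) h2
      have e2 := E1 (i+1) j (by omega) h2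
      by_cases hw : w (i+1) ≤ j
      · have e3 : Fcnt (S (t+1)) i j ≤ Fcnt (S t) i j := by
          rcases Nat.lt_or_ge r i with h | h
          · have := E1 i j h (by omega)
            by_cases hwi : w i ≤ j <;> simp only [hwi, ite_true, ite_false] at this <;> omega
          · have := E0 i j (by omega)
            omega
        rw [if_pos hw] at e2
        rw [if_pos (by omega : w (i+1) ≤ j + 1)] at e1
        omega
      · by_cases hw1 : w (i+1) ≤ j + 1
        · have hwj : w (i+1) = j + 1 := by omega
          have hD0 : rowcnt (S t) (i+1) (j+1) = rowcnt (S t) i j :=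
            F2 i j (by omega) (by omega) hwj
          have e3 : Fcnt (S (t+1)) i j = Fcnt (S t) i j := by
            rcases Nat.lt_or_ge r i with h | h
            · have hwi : w i ≤ j := by
                have := F1 i (by omega) (by omega)
                omega
              have := E1 i j h (by omega)
              rw [if_pos hwi] at this
              omega
            · exact E0 i j (by omega)
          rw [if_pos hw1] at e1
          rw [if_neg hw] at e2
          omega
        · rw [if_neg hw1] at e1
          rw [if_neg hw] at e2
          have key : Fcnt (S (t+1)) i j + 1 ≤ Fcnt (S t) i j ∨
              (Fcnt (S (t+1)) i j = Fcnt (S t) i j ∧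
                rowcnt (S t) (i+1) (j+1) < rowcnt (S t) i j) := by
            rcases Nat.lt_or_ge r i with h | h
            · have hE := E1 i j h (by omega)
              by_cases hwi : w i ≤ j
              · right
                rw [if_pos hwi] at hE
                exact ⟨by omega, F3 i j (by omega) (by omega) (Or.inr hwi)
                  (Or.inr (by omega))⟩
              · left
                rw [if_neg hwi] at hE
                omega
            · have hir : i = r := by omega
              subst hir
              right
              exact ⟨E0 i j le_rfl, F3 i j le_rfl (by omega) (Or.inl rfl)
                (Or.inr (by omega))⟩
          omega
    · push_neg at h2
      have e1 := E2 (i+1) (j+1) h2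
      have e2 := E2 (i+1) j h2
      have key : Fcnt (S (t+1)) i j + 1 ≤ Fcnt (S t) i j ∨
          (Fcnt (S (t+1)) i j = Fcnt (S t) i j ∧
            rowcnt (S t) (i+1) (j+1) < rowcnt (S t) i j) := by
        rcases Nat.lt_or_ge L i with h | h
        · left
          have := E2 i j h
          omega
        · have hiL : i = L := by omega
          subst hiL
          rcases Nat.lt_or_ge r i with h' | h'
          · have hE := E1 i j h' le_rfl
            by_cases hwi : w i ≤ j
            · right
              rw [if_pos hwi] at hE
              exact ⟨by omega, F3 i j (by omega) le_rfl (Or.inr hwi) (Or.inl rfl)⟩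
            · left
              rw [if_neg hwi] at hE
              omega
          · have hir : i = r := by omega
            right
            exact ⟨E0 i j (by omega), F3 i j (by omega) le_rfl (Or.inl hir)
              (Or.inl rfl)⟩
      omega
end

section
/- Let n ≥ 1 and 1 ≤ k ≤ n. Let I = (I_1,…,I_n) and U = (U_1,…,U_{n−k}) be vectors of positive reals. Then there exists a unique pair of real vectors I' = (I'_1,…,I'_n) and U' = (U'_1,…,U'_{n−k}) such that F_k(U')E(I) = E(I')F_k(U) as n×n real matrices; moreover all entries of I' and U' are positive. -/
/-- Extend a vector `V : Fin m → ℝ` to `ℕ → ℝ` by zero. -/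
def padded {m : ℕ} (V : Fin m → ℝ) : ℕ → ℝ :=
  fun t => if h : t < m then V ⟨t, h⟩ else 0

/-- The matrix E(I): diagonal entries I_i, entries 1 on the superdiagonal. -/
def Ematrix (n : ℕ) (I : Fin n → ℝ) : Matrix (Fin n) (Fin n) ℝ :=
  Matrix.of fun r c =>
    if (c : ℕ) = (r : ℕ) then I r else if (c : ℕ) = (r : ℕ) + 1 then 1 else 0

/-- The matrix F_k(V) (1-indexed description: F_k(V)_{ii} = 1,
F_k(V)_{i+1,i} = −V_{i−k+1} for k ≤ i ≤ n−1, other entries 0). -/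
def Fkmatrix (n k : ℕ) (V : Fin (n - k) → ℝ) : Matrix (Fin n) (Fin n) ℝ :=
  Matrix.of fun r c =>
    if (r : ℕ) = (c : ℕ) then 1
    else if (r : ℕ) = (c : ℕ) + 1 ∧ k ≤ (c : ℕ) + 1 then -(padded V ((c : ℕ) + 1 - k))
    else 0


/-!
Both `F_k(U') E(I)` and `E(I') F_k(U)` are tridiagonal with unit superdiagonal, so the
identity amounts to equality of their diagonals and subdiagonals. Writing `u_r`, `v_r` for
the negated subdiagonal entries of `F_k(U)` and `F_k(U')` in row `r`, row `r` gives
`I_r - v_r = I'_r - u_{r+1}` and `v_r I_{r-1} = I'_r u_r`: a linear system in `(I'_r, v_r)`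
with determinant `I_{r-1} + u_r > 0`. Its unique solution is an explicit positive expression,
so the rows decouple and `I'`, `U'` exist, are unique and are positive.
-/

lemma padded_of_lt {m t : ℕ} (V : Fin m → ℝ) (h : t < m) : padded V t = V ⟨t, h⟩ := dif_pos h

@[simp] lemma padded_coe {m : ℕ} (V : Fin m → ℝ) (i : Fin m) : padded V i = V i :=
  padded_of_lt V i.2

lemma padded_nonneg {m : ℕ} {V : Fin m → ℝ} (hV : ∀ i, 0 ≤ V i) (t : ℕ) : 0 ≤ padded V t := by
  unfold padded
  split_ifs
  exacts [hV _, le_rfl]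

lemma padded_pos {m t : ℕ} {V : Fin m → ℝ} (hV : ∀ i, 0 < V i) (ht : t < m) :
    0 < padded V t := by
  rw [padded_of_lt V ht]
  exact hV _

def FkSubdiag {m : ℕ} (k : ℕ) (V : Fin m → ℝ) (t : ℕ) : ℝ :=
  if k ≤ t then padded V (t - k) else 0

section FkSubdiag

variable {m k : ℕ} (V : Fin m → ℝ)

lemma FkSubdiag_of_lt {t : ℕ} (h : t < k) : FkSubdiag k V t = 0 := if_neg (by omega)

lemma FkSubdiag_of_le {t : ℕ} (h : m ≤ t - k) : FkSubdiag k V t = 0 := by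
  simp [FkSubdiag, padded, show ¬ t - k < m by omega]

lemma FkSubdiag_add (j : ℕ) : FkSubdiag k V (j + k) = padded V j := by
  simp [FkSubdiag]

end FkSubdiag

lemma FkSubdiag_nonneg {m : ℕ} (k : ℕ) {V : Fin m → ℝ} (hV : ∀ i, 0 ≤ V i) (t : ℕ) :
    0 ≤ FkSubdiag k V t := by
  unfold FkSubdiag
  split_ifs
  exacts [padded_nonneg hV _, le_rfl]

lemma FkSubdiag_shift {m k t : ℕ} {f : ℕ → ℝ} (hf : ∀ s < k, f s = 0) (ht : t < m + k) :
    FkSubdiag k (fun j : Fin m => f (j + k)) t = f t := by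
  unfold FkSubdiag
  split_ifs with h
  · rw [padded_of_lt _ (by omega), Nat.sub_add_cancel h]
  · exact (hf t (by omega)).symm

lemma Fkmatrix_apply {n k : ℕ} (V : Fin (n - k) → ℝ) (r c : Fin n) :
    Fkmatrix n k V r c =
      (if r = c then 1 else 0) - if (r : ℕ) = c + 1 then FkSubdiag k V r else 0 := by
  unfold Fkmatrix FkSubdiag
  simp only [Matrix.of_apply, Fin.ext_iff]
  split_ifs <;> first | omega | simp_all

lemma Fkmatrix_mul_apply {n k : ℕ} (hk : 1 ≤ k) (V : Fin (n - k) → ℝ)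
    (M : Matrix (Fin n) (Fin n) ℝ) (r c : Fin n) :
    (Fkmatrix n k V * M) r c = M r c - FkSubdiag k V r * M ⟨r - 1, by omega⟩ c := by
  simp only [Matrix.mul_apply, Fkmatrix_apply, sub_mul, Finset.sum_sub_distrib, ite_mul,
    one_mul, zero_mul, Finset.sum_ite_eq, Finset.mem_univ, if_true]
  congr 1
  rw [Finset.sum_eq_single ⟨r - 1, by omega⟩]
  · by_cases hr : (r : ℕ) = 0
    · rw [FkSubdiag_of_lt V (show (r : ℕ) < k by omega)]
      simp [hr]
    · simp only [if_pos (show (r : ℕ) = r - 1 + 1 by omega)]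
  · intro j _ hj
    rw [if_neg]
    exact fun h => hj (Fin.ext (by simp; omega))
  · simp

lemma mul_Fkmatrix_apply {n k : ℕ} (V : Fin (n - k) → ℝ)
    (M : Matrix (Fin n) (Fin n) ℝ) (r c : Fin n) :
    (M * Fkmatrix n k V) r c =
      M r c - if h : (c : ℕ) + 1 < n then M r ⟨c + 1, h⟩ * FkSubdiag k V (c + 1) else 0 := by
  simp only [Matrix.mul_apply, Fkmatrix_apply, mul_sub, Finset.sum_sub_distrib, mul_ite,
    mul_one, mul_zero, Finset.sum_ite_eq', Finset.mem_univ, if_true]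
  congr 1
  split_ifs with h
  · rw [Finset.sum_eq_single ⟨c + 1, h⟩]
    · simp
    · intro j _ hj
      rw [if_neg]
      exact fun h => hj (Fin.ext h)
    · simp
  · refine Finset.sum_eq_zero fun j _ => if_neg ?_
    omega

def bandMatrix (n : ℕ) (d l : ℕ → ℝ) : Matrix (Fin n) (Fin n) ℝ :=
  Matrix.of fun r c =>
    if (c : ℕ) = r then d r else if (c : ℕ) = r + 1 then 1 else if (c : ℕ) + 1 = r then l r else 0

lemma bandMatrix_eq_iff {n : ℕ} {d l d' l' : ℕ → ℝ} (hl : l 0 = l' 0) :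
    bandMatrix n d l = bandMatrix n d' l' ↔ ∀ r : Fin n, d r = d' r ∧ l r = l' r := by
  constructor
  · intro H r
    have hd := congrFun (congrFun H r) r
    have hs := congrFun (congrFun H r) ⟨r - 1, by omega⟩
    simp only [bandMatrix, Matrix.of_apply] at hd hs
    refine ⟨by simpa using hd, ?_⟩
    rcases Nat.eq_zero_or_pos r with hr | hr
    · rwa [hr]
    · simpa [show (r : ℕ) - 1 ≠ r by omega, show (r : ℕ) - 1 + 1 = r by omega] using hs
  · intro h
    ext r c
    simp only [bandMatrix, Matrix.of_apply]
    split_ifs <;> simp [h r]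

lemma Fkmatrix_mul_Ematrix {n k : ℕ} (hk : 1 ≤ k) (V : Fin (n - k) → ℝ) (I : Fin n → ℝ) :
    Fkmatrix n k V * Ematrix n I =
      bandMatrix n (fun r => padded I r - FkSubdiag k V r)
        (fun r => -(FkSubdiag k V r * padded I (r - 1))) := by
  ext r c
  have h0 : (r : ℕ) - 1 = r → FkSubdiag k V r = 0 := fun _ => FkSubdiag_of_lt V (by omega)
  rw [Fkmatrix_mul_apply hk]
  simp only [Ematrix, bandMatrix, Matrix.of_apply, padded_of_lt I r.2,
    padded_of_lt I (show (r : ℕ) - 1 < n by omega)]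
  split_ifs <;> first | omega | simp_all

lemma Ematrix_mul_Fkmatrix {n k : ℕ} (J : Fin n → ℝ) (U : Fin (n - k) → ℝ) :
    Ematrix n J * Fkmatrix n k U =
      bandMatrix n (fun r => padded J r - FkSubdiag k U (r + 1))
        (fun r => -(padded J r * FkSubdiag k U r)) := by
  ext r c
  have hn : n ≤ (r : ℕ) + 1 → FkSubdiag k U (r + 1) = 0 := fun _ => FkSubdiag_of_le U (by omega)
  rw [mul_Fkmatrix_apply]
  simp only [Ematrix, bandMatrix, Matrix.of_apply, padded_of_lt J r.2]
  split_ifs <;> first | omega | simp_all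

lemma exchange_eqns_iff {a u u' x v J : ℝ} (h : a + u ≠ 0) :
    (x - v = J - u' ∧ v * a = J * u) ↔
      J = (x + u') * a / (a + u) ∧ v = u * (x + u') / (a + u) := by
  constructor
  · rintro ⟨hd, hs⟩
    rw [eq_div_iff h, eq_div_iff h]
    exact ⟨by linear_combination -a * hd - hs, by linear_combination hs - u * hd⟩
  · rintro ⟨rfl, rfl⟩
    constructor
    · field_simp
      ring
    · field_simp

section Exchange

variable {n m : ℕ} (k : ℕ) (I : Fin n → ℝ) (U : Fin m → ℝ)

-- At `r = 0` the truncated `r - 1` is harmless, since `FkSubdiag k U 0 = 0` for `1 ≤ k`.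
noncomputable def exchangeDiag (r : ℕ) : ℝ :=
  (padded I r + FkSubdiag k U (r + 1)) * padded I (r - 1) / (padded I (r - 1) + FkSubdiag k U r)

noncomputable def exchangeSubdiag (r : ℕ) : ℝ :=
  FkSubdiag k U r * (padded I r + FkSubdiag k U (r + 1)) / (padded I (r - 1) + FkSubdiag k U r)

variable {k I U}

lemma exchangeSubdiag_of_lt {r : ℕ} (hr : r < k) : exchangeSubdiag k I U r = 0 := by
  simp [exchangeSubdiag, FkSubdiag_of_lt U hr]

lemma exchangeDiag_pos (hI : ∀ i, 0 < I i) (hU : ∀ i, 0 ≤ U i) {r : ℕ} (hr : r < n) :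
    0 < exchangeDiag k I U r := by
  have := padded_pos hI hr
  have := padded_pos hI (show r - 1 < n by omega)
  have := FkSubdiag_nonneg k hU r
  have := FkSubdiag_nonneg k hU (r + 1)
  unfold exchangeDiag
  positivity

lemma exchangeSubdiag_pos (hI : ∀ i, 0 < I i) (hU : ∀ i, 0 < U i) (j : Fin m)
    (hj : j + k < n) : 0 < exchangeSubdiag k I U (j + k) := by
  have := padded_pos hI hj
  have := padded_pos hI (show j + k - 1 < n by omega)
  have := FkSubdiag_nonneg k (fun i => (hU i).le) (j + k + 1)
  have := hU j
  rw [exchangeSubdiag, FkSubdiag_add, padded_coe]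
  positivity

end Exchange

lemma Fkmatrix_mul_Ematrix_eq_iff {n k : ℕ} (hk : 1 ≤ k) {I : Fin n → ℝ}
    {U : Fin (n - k) → ℝ} (hI : ∀ i, 0 < I i) (hU : ∀ i, 0 ≤ U i)
    (J : Fin n → ℝ) (V : Fin (n - k) → ℝ) :
    Fkmatrix n k V * Ematrix n I = Ematrix n J * Fkmatrix n k U ↔
      ∀ r : Fin n, J r = exchangeDiag k I U r ∧ FkSubdiag k V r = exchangeSubdiag k I U r := by
  rw [Fkmatrix_mul_Ematrix hk, Ematrix_mul_Fkmatrix,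
    bandMatrix_eq_iff (by simp [FkSubdiag_of_lt _ (show 0 < k by omega)])]
  refine forall_congr' fun r => ?_
  have ha := padded_pos hI (show (r : ℕ) - 1 < n by omega)
  have hu := FkSubdiag_nonneg k hU r
  rw [neg_inj, padded_coe J, exchange_eqns_iff (by positivity)]
  rfl

theorem exists_unique_FkE_exchange_general (n k : ℕ) (hk1 : 1 ≤ k)
    (I : Fin n → ℝ) (U : Fin (n - k) → ℝ)
    (hI : ∀ i, 0 < I i) (hU : ∀ i, 0 < U i) :
    ∃ (I' : Fin n → ℝ) (U' : Fin (n - k) → ℝ),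
      Fkmatrix n k U' * Ematrix n I = Ematrix n I' * Fkmatrix n k U ∧
      (∀ i, 0 < I' i) ∧ (∀ i, 0 < U' i) ∧
      ∀ (I'' : Fin n → ℝ) (U'' : Fin (n - k) → ℝ),
        Fkmatrix n k U'' * Ematrix n I = Ematrix n I'' * Fkmatrix n k U →
        I'' = I' ∧ U'' = U' := by
  have hchar := Fkmatrix_mul_Ematrix_eq_iff hk1 hI fun i => (hU i).le
  set U' : Fin (n - k) → ℝ := fun j => exchangeSubdiag k I U (j + k)
  have hU' (r : Fin n) : FkSubdiag k U' r = exchangeSubdiag k I U r :=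
    FkSubdiag_shift (fun _ => exchangeSubdiag_of_lt) (by omega)
  refine ⟨fun r => exchangeDiag k I U r, U', (hchar _ _).2 fun r => ⟨rfl, hU' r⟩,
    fun r => exchangeDiag_pos hI (fun i => (hU i).le) r.2,
    fun j => exchangeSubdiag_pos hI hU j (by omega), fun I'' U'' H => ?_⟩
  have hsol := (hchar _ _).1 H
  refine ⟨funext fun r => (hsol r).1, funext fun j => ?_⟩
  have := (hsol ⟨j + k, by omega⟩).2
  rwa [FkSubdiag_add, padded_coe] at this

theorem exists_unique_FkE_exchange (n k : ℕ) (hn : 1 ≤ n) (hk1 : 1 ≤ k) (hkn : k ≤ n)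
    (I : Fin n → ℝ) (U : Fin (n - k) → ℝ)
    (hI : ∀ i, 0 < I i) (hU : ∀ i, 0 < U i) :
    ∃ (I' : Fin n → ℝ) (U' : Fin (n - k) → ℝ),
      Fkmatrix n k U' * Ematrix n I = Ematrix n I' * Fkmatrix n k U ∧
      (∀ i, 0 < I' i) ∧ (∀ i, 0 < U' i) ∧
      ∀ (I'' : Fin n → ℝ) (U'' : Fin (n - k) → ℝ),
        Fkmatrix n k U'' * Ematrix n I = Ematrix n I'' * Fkmatrix n k U →
        I'' = I' ∧ U'' = U' :=
  exists_unique_FkE_exchange_general n k hk1 I U hI hU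
end

section
/- Let n ≥ 2. For each ε > 0 let I_i(ε) (1 ≤ i ≤ n) and U_i(ε) (1 ≤ i ≤ n−1) be positive reals, continuous in ε, and suppose each I_i has tropical limit Q_i ∈ ℝ and each U_i has tropical limit W_i ∈ ℝ. For each ε > 0 let (I'(ε), U'(ε)) be the unique positive solution of F_1(U'(ε))E(I(ε)) = E(I'(ε))F_1(U(ε)). Then each I'_i and U'_i has a tropical limit, denoted Q'_i and W'_i, and with the convention min(Q_n, W_n) := Q_n and min(Q_0, W_0) := 0, Q_0 := 0, these satisfy Q'_{i+1} = (min(Q_{i+1}, W_{i+1}) − min(Q_i, W_i)) + Q_i for 0 ≤ i ≤ n−1 and W'_i = (min(Q_{i+1}, W_{i+1}) − min(Q_i, W_i)) + W_i for 1 ≤ i ≤ n−1. -/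
/-- `f` has tropical limit `A`: lim_{ε→0+} ε log f(ε) = −A. -/
def TropLimit (f : ℝ → ℝ) (A : ℝ) : Prop :=
  Filter.Tendsto (fun ε => ε * Real.log (f ε)) (nhdsWithin 0 (Set.Ioi 0)) (nhds (-A))

/-- 1-indexed padding of a vector: `pad1 Q i` = Q_i for 1 ≤ i ≤ m, 0 otherwise. -/
def pad1 {m : ℕ} (Q : Fin m → ℝ) : ℕ → ℝ :=
  fun i => if h : 1 ≤ i ∧ i ≤ m then Q ⟨i - 1, by omega⟩ else 0

/-- `mconv n q w i` = min(Q_i, W_i), with the conventions min(Q_0, W_0) := 0 and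
min(Q_n, W_n) := Q_n. -/
def mconv (n : ℕ) (q w : ℕ → ℝ) (i : ℕ) : ℝ :=
  if i = 0 then 0 else if i = n then q i else min (q i) (w i)

open Filter Set Real

lemma trop_congr {f g : ℝ → ℝ} {A : ℝ} (h : ∀ ε ∈ Set.Ioi (0:ℝ), f ε = g ε)
    (hf : TropLimit f A) : TropLimit g A := by
  refine hf.congr' ?_
  filter_upwards [self_mem_nhdsWithin] with ε hε
  rw [h ε hε]

lemma trop_mul {f g : ℝ → ℝ} {A B : ℝ} (hf : ∀ ε ∈ Set.Ioi (0:ℝ), 0 < f ε)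
    (hg : ∀ ε ∈ Set.Ioi (0:ℝ), 0 < g ε)
    (hA : TropLimit f A) (hB : TropLimit g B) :
    TropLimit (fun ε => f ε * g ε) (A + B) := by
  have h := hA.add hB
  rw [show -A + -B = -(A+B) by ring] at h
  refine h.congr' ?_
  filter_upwards [self_mem_nhdsWithin] with ε hε
  rw [Real.log_mul (hf ε hε).ne' (hg ε hε).ne']
  ring

lemma trop_div {f g : ℝ → ℝ} {A B : ℝ} (hf : ∀ ε ∈ Set.Ioi (0:ℝ), 0 < f ε)
    (hg : ∀ ε ∈ Set.Ioi (0:ℝ), 0 < g ε)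
    (hA : TropLimit f A) (hB : TropLimit g B) :
    TropLimit (fun ε => f ε / g ε) (A - B) := by
  have h := hA.sub hB
  rw [show -A - -B = -(A-B) by ring] at h
  refine h.congr' ?_
  filter_upwards [self_mem_nhdsWithin] with ε hε
  rw [Real.log_div (hf ε hε).ne' (hg ε hε).ne']
  ring

lemma trop_add {f g : ℝ → ℝ} {A B : ℝ} (hf : ∀ ε ∈ Set.Ioi (0:ℝ), 0 < f ε)
    (hg : ∀ ε ∈ Set.Ioi (0:ℝ), 0 < g ε)
    (hA : TropLimit f A) (hB : TropLimit g B) :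
    TropLimit (fun ε => f ε + g ε) (min A B) := by
  have h1 : Tendsto (fun ε => max (ε * Real.log (f ε)) (ε * Real.log (g ε)))
      (nhdsWithin 0 (Set.Ioi 0)) (nhds (max (-A) (-B))) := hA.max hB
  have tz : Tendsto (fun ε : ℝ => ε * Real.log 2) (nhdsWithin 0 (Set.Ioi 0)) (nhds 0) := by
    have h0 : Tendsto (fun ε : ℝ => ε) (nhdsWithin 0 (Set.Ioi 0)) (nhds 0) :=
      tendsto_id.mono_right nhdsWithin_le_nhds
    simpa using h0.mul_const (Real.log 2)
  have h2 : Tendsto (fun ε => ε * Real.log ((f ε + g ε) / max (f ε) (g ε)))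
      (nhdsWithin 0 (Set.Ioi 0)) (nhds 0) := by
    apply tendsto_of_tendsto_of_tendsto_of_le_of_le' tendsto_const_nhds tz
    · filter_upwards [self_mem_nhdsWithin] with ε hε
      have hfε := hf ε hε; have hgε := hg ε hε
      have hmax : 0 < max (f ε) (g ε) := lt_max_of_lt_left hfε
      have : 1 ≤ (f ε + g ε) / max (f ε) (g ε) := by
        rw [le_div_iff₀ hmax]
        simpa using max_le (le_add_of_nonneg_right hgε.le) (le_add_of_nonneg_left hfε.le)
      exact mul_nonneg (le_of_lt hε) (Real.log_nonneg this)
    · filter_upwards [self_mem_nhdsWithin] with ε hε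
      have hfε := hf ε hε; have hgε := hg ε hε
      have hmax : 0 < max (f ε) (g ε) := lt_max_of_lt_left hfε
      have hle : (f ε + g ε) / max (f ε) (g ε) ≤ 2 := by
        rw [div_le_iff₀ hmax, two_mul]
        exact add_le_add (le_max_left _ _) (le_max_right _ _)
      exact mul_le_mul_of_nonneg_left (Real.log_le_log (by positivity) hle) (le_of_lt hε)
  have h3 := h1.add h2
  rw [add_zero, show max (-A) (-B) = -(min A B) by
    rcases le_total A B with h | h <;>
      simp [min_eq_left, min_eq_right, h, max_eq_left, max_eq_right, neg_le_neg h]] at h3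
  refine h3.congr' ?_
  filter_upwards [self_mem_nhdsWithin] with ε hε
  have hfε := hf ε hε; have hgε := hg ε hε
  have hmax : 0 < max (f ε) (g ε) := lt_max_of_lt_left hfε
  have hsum : 0 < f ε + g ε := by linarith
  have hlm : max (ε * Real.log (f ε)) (ε * Real.log (g ε))
      = ε * Real.log (max (f ε) (g ε)) := by
    rcases le_total (f ε) (g ε) with h | h
    · rw [max_eq_right h, max_eq_right]
      exact mul_le_mul_of_nonneg_left (Real.log_le_log hfε h) (le_of_lt hε)
    · rw [max_eq_left h, max_eq_left]
      exact mul_le_mul_of_nonneg_left (Real.log_le_log hgε h) (le_of_lt hε)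
  rw [hlm, Real.log_div hsum.ne' hmax.ne']
  ring

lemma padded_lt {m : ℕ} (V : Fin m → ℝ) (t : ℕ) (h : t < m) : padded V t = V ⟨t, h⟩ :=
  dif_pos h

lemma F_diag {n : ℕ} (V : Fin (n-1) → ℝ) (a b : Fin n) (h : (a:ℕ) = (b:ℕ)) :
    Fkmatrix n 1 V a b = 1 := by simp [Fkmatrix, h]

lemma F_sub {n : ℕ} (V : Fin (n-1) → ℝ) (a b : Fin n) (h : (a:ℕ) = (b:ℕ)+1) :
    Fkmatrix n 1 V a b = -(padded V b) := by
  have : (a:ℕ) ≠ (b:ℕ) := by omega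
  simp [Fkmatrix, this, h]

lemma F_zero {n : ℕ} (V : Fin (n-1) → ℝ) (a b : Fin n) (h1 : (a:ℕ) ≠ (b:ℕ))
    (h2 : (a:ℕ) ≠ (b:ℕ)+1) : Fkmatrix n 1 V a b = 0 := by
  simp [Fkmatrix, h1, h2]

lemma E_diag {n : ℕ} (I : Fin n → ℝ) (a b : Fin n) (h : (a:ℕ) = (b:ℕ)) :
    Ematrix n I a b = I a := by simp [Ematrix, h.symm]

lemma E_super {n : ℕ} (I : Fin n → ℝ) (a b : Fin n) (h : (b:ℕ) = (a:ℕ)+1) :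
    Ematrix n I a b = 1 := by
  have : (b:ℕ) ≠ (a:ℕ) := by omega
  simp [Ematrix, this, h]

lemma E_zero {n : ℕ} (I : Fin n → ℝ) (a b : Fin n) (h1 : (b:ℕ) ≠ (a:ℕ))
    (h2 : (b:ℕ) ≠ (a:ℕ)+1) : Ematrix n I a b = 0 := by
  simp [Ematrix, h1, h2]

lemma sum_two {n : ℕ} (f : Fin n → ℝ) (a b : Fin n) (hab : a ≠ b)
    (h : ∀ j, j ≠ a → j ≠ b → f j = 0) : ∑ j, f j = f a + f b := by
  rw [← Finset.sum_pair hab]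
  refine (Finset.sum_subset (Finset.subset_univ _) ?_).symm
  intro x _ hx
  simp only [Finset.mem_insert, Finset.mem_singleton] at hx
  push_neg at hx
  exact h x hx.1 hx.2

lemma entry00 {n : ℕ} (hn : 2 ≤ n) (Iv I'v : Fin n → ℝ) (Uv U'v : Fin (n-1) → ℝ)
    (h : Fkmatrix n 1 U'v * Ematrix n Iv = Ematrix n I'v * Fkmatrix n 1 Uv) :
    I'v ⟨0, by omega⟩ = Iv ⟨0, by omega⟩ + Uv ⟨0, by omega⟩ := by
  have key := Matrix.ext_iff.2 h ⟨0, by omega⟩ ⟨0, by omega⟩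
  rw [Matrix.mul_apply, Matrix.mul_apply] at key
  rw [Finset.sum_eq_single (⟨0, by omega⟩ : Fin n)
      (fun j _ hj => by
        rw [F_zero U'v _ j (by simpa [Fin.ext_iff, eq_comm] using hj)
          (by simp only [Fin.val_mk]; omega), zero_mul])
      (by simp)] at key
  rw [sum_two _ (⟨0, by omega⟩ : Fin n) (⟨1, by omega⟩ : Fin n) (by simp [Fin.ext_iff])
      (fun j h1 h2 => by
        rw [E_zero I'v _ j (by simpa [Fin.ext_iff, eq_comm] using h1)
          (by simpa [Fin.ext_iff, eq_comm] using h2), zero_mul])] at key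
  rw [F_diag _ _ _ rfl, E_diag _ _ _ rfl, E_diag _ _ _ rfl, F_diag _ _ _ rfl,
    E_super _ _ _ rfl, F_sub _ _ _ rfl, padded_lt _ _ (by omega : (0:ℕ) < n - 1)] at key
  simp at key
  linarith

lemma entrySub {n : ℕ} (hn : 2 ≤ n) (Iv I'v : Fin n → ℝ) (Uv U'v : Fin (n-1) → ℝ)
    (h : Fkmatrix n 1 U'v * Ematrix n Iv = Ematrix n I'v * Fkmatrix n 1 Uv)
    (s : ℕ) (hs : s + 1 ≤ n - 1) :
    U'v ⟨s, by omega⟩ * Iv ⟨s, by omega⟩ = I'v ⟨s+1, by omega⟩ * Uv ⟨s, by omega⟩ := by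
  have key := Matrix.ext_iff.2 h ⟨s+1, by omega⟩ ⟨s, by omega⟩
  rw [Matrix.mul_apply, Matrix.mul_apply] at key
  rw [sum_two _ (⟨s, by omega⟩ : Fin n) (⟨s+1, by omega⟩ : Fin n) (by simp [Fin.ext_iff])
      (fun j h1 h2 => by
        rw [F_zero U'v _ j (by simpa [Fin.ext_iff, eq_comm] using h2)
          (by simp only [Fin.val_mk]; simpa [Fin.ext_iff, eq_comm] using h1), zero_mul])] at key
  rw [Finset.sum_eq_single (⟨s+1, by omega⟩ : Fin n)
      (fun j _ hj => by
        by_cases hj2 : (j : ℕ) = s + 2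
        · rw [F_zero Uv j _ (by simp only [Fin.val_mk]; omega)
            (by simp only [Fin.val_mk]; omega), mul_zero]
        · rw [E_zero I'v _ j (by simpa [Fin.ext_iff, eq_comm] using hj)
            (by simp only [Fin.val_mk]; omega), zero_mul])
      (by simp)] at key
  rw [F_sub _ _ _ rfl, E_diag _ _ _ rfl, F_diag _ _ _ rfl,
    E_zero Iv _ _ (by simp) (by simp only [Fin.val_mk]; omega),
    E_diag _ _ _ rfl, F_sub _ _ _ rfl,
    padded_lt _ _ (by omega : s < n - 1), padded_lt _ _ (by omega : s < n - 1)] at key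
  simp at key
  linarith

lemma entryMid {n : ℕ} (hn : 2 ≤ n) (Iv I'v : Fin n → ℝ) (Uv U'v : Fin (n-1) → ℝ)
    (h : Fkmatrix n 1 U'v * Ematrix n Iv = Ematrix n I'v * Fkmatrix n 1 Uv)
    (s : ℕ) (hs : s + 1 ≤ n - 2) :
    Iv ⟨s+1, by omega⟩ - U'v ⟨s, by omega⟩ = I'v ⟨s+1, by omega⟩ - Uv ⟨s+1, by omega⟩ := by
  have key := Matrix.ext_iff.2 h ⟨s+1, by omega⟩ ⟨s+1, by omega⟩
  rw [Matrix.mul_apply, Matrix.mul_apply] at key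
  rw [sum_two _ (⟨s, by omega⟩ : Fin n) (⟨s+1, by omega⟩ : Fin n) (by simp [Fin.ext_iff])
      (fun j h1 h2 => by
        rw [F_zero U'v _ j (by simpa [Fin.ext_iff, eq_comm] using h2)
          (by simp only [Fin.val_mk]; simpa [Fin.ext_iff, eq_comm] using h1), zero_mul])] at key
  rw [sum_two _ (⟨s+1, by omega⟩ : Fin n) (⟨s+2, by omega⟩ : Fin n) (by simp [Fin.ext_iff])
      (fun j h1 h2 => by
        rw [E_zero I'v _ j (by simpa [Fin.ext_iff, eq_comm] using h1)
          (by simp only [Fin.val_mk]; simpa [Fin.ext_iff, eq_comm] using h2), zero_mul])] at key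
  rw [F_sub _ _ _ rfl, E_super _ _ _ rfl, F_diag _ _ _ rfl, E_diag _ _ _ rfl,
    E_diag _ _ _ rfl, F_diag _ _ _ rfl, E_super _ _ _ rfl, F_sub _ _ _ rfl,
    padded_lt _ _ (by omega : s < n - 1), padded_lt _ _ (by omega : s + 1 < n - 1)] at key
  simp at key
  linarith

lemma entryLast {n : ℕ} (hn : 2 ≤ n) (Iv I'v : Fin n → ℝ) (Uv U'v : Fin (n-1) → ℝ)
    (h : Fkmatrix n 1 U'v * Ematrix n Iv = Ematrix n I'v * Fkmatrix n 1 Uv) :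
    Iv ⟨n-1, by omega⟩ - U'v ⟨n-2, by omega⟩ = I'v ⟨n-1, by omega⟩ := by
  have key := Matrix.ext_iff.2 h ⟨n-1, by omega⟩ ⟨n-1, by omega⟩
  rw [Matrix.mul_apply, Matrix.mul_apply] at key
  rw [sum_two _ (⟨n-2, by omega⟩ : Fin n) (⟨n-1, by omega⟩ : Fin n)
      (by simp [Fin.ext_iff]; omega)
      (fun j h1 h2 => by
        rw [F_zero U'v _ j (by simp only [Fin.val_mk]; simpa [Fin.ext_iff, eq_comm] using h2)
          (by simp only [Fin.val_mk]
              have := (Fin.ext_iff.not.mp h1); simp only [Fin.val_mk] at this; omega),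
          zero_mul])] at key
  rw [Finset.sum_eq_single (⟨n-1, by omega⟩ : Fin n)
      (fun j _ hj => by
        rw [E_zero I'v _ j (by simpa [Fin.ext_iff, eq_comm] using hj)
          (by simp only [Fin.val_mk]; omega), zero_mul])
      (by simp)] at key
  rw [F_sub _ _ _ (by simp only [Fin.val_mk]; omega),
    E_super _ _ _ (by simp only [Fin.val_mk]; omega),
    F_diag _ _ _ rfl, E_diag _ _ _ rfl, E_diag _ _ _ rfl, F_diag _ _ _ rfl,
    padded_lt _ _ (by omega : n - 2 < n - 1)] at key
  simp at key
  linarith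

/- STATEMENT 7: tropicalization of F_1(U')E(I) = E(I')F_1(U).  Here
`pad1 Q i` = Q_i and `pad1 W i` = W_i in 1-indexed notation. -/
theorem tropicalization_of_EF_exchange (n : ℕ) (hn : 2 ≤ n)
    (I I' : ℝ → Fin n → ℝ) (U U' : ℝ → Fin (n - 1) → ℝ)
    (Q : Fin n → ℝ) (W : Fin (n - 1) → ℝ)
    (hIpos : ∀ ε, 0 < ε → ∀ i, 0 < I ε i)
    (hUpos : ∀ ε, 0 < ε → ∀ i, 0 < U ε i)
    (hIcont : ∀ i, ContinuousOn (fun ε => I ε i) (Set.Ioi (0:ℝ)))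
    (hUcont : ∀ i, ContinuousOn (fun ε => U ε i) (Set.Ioi (0:ℝ)))
    (hQ : ∀ i, TropLimit (fun ε => I ε i) (Q i))
    (hW : ∀ i, TropLimit (fun ε => U ε i) (W i))
    -- (I'(ε), U'(ε)) is the (unique) positive solution of F_1(U')E(I) = E(I')F_1(U)
    (heq : ∀ ε, 0 < ε →
      Fkmatrix n 1 (U' ε) * Ematrix n (I ε) = Ematrix n (I' ε) * Fkmatrix n 1 (U ε))
    (hI'pos : ∀ ε, 0 < ε → ∀ i, 0 < I' ε i)
    (hU'pos : ∀ ε, 0 < ε → ∀ i, 0 < U' ε i) :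
    ∃ (Q' : Fin n → ℝ) (W' : Fin (n - 1) → ℝ),
      (∀ i, TropLimit (fun ε => I' ε i) (Q' i)) ∧
      (∀ i, TropLimit (fun ε => U' ε i) (W' i)) ∧
      -- Q'_{i+1} = (min(Q_{i+1}, W_{i+1}) − min(Q_i, W_i)) + Q_i   (0 ≤ i ≤ n−1)
      (∀ i : ℕ, i ≤ n - 1 →
        pad1 Q' (i+1) =
          (mconv n (pad1 Q) (pad1 W) (i+1) - mconv n (pad1 Q) (pad1 W) i) + pad1 Q i) ∧
      -- W'_i = (min(Q_{i+1}, W_{i+1}) − min(Q_i, W_i)) + W_i   (1 ≤ i ≤ n−1)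
      (∀ i : ℕ, 1 ≤ i → i ≤ n - 1 →
        pad1 W' i =
          (mconv n (pad1 Q) (pad1 W) (i+1) - mconv n (pad1 Q) (pad1 W) i) + pad1 W i) := by
  -- value lemmas
  have hpad : ∀ {m : ℕ} (f : Fin m → ℝ) (j:ℕ) (hj : j < m), pad1 f (j+1) = f ⟨j, hj⟩ := by
    intro m f j hj
    simp only [pad1, dif_pos (show 1 ≤ j+1 ∧ j+1 ≤ m by omega), Nat.add_sub_cancel]
  have hq : ∀ (j:ℕ) (hj : j < n), pad1 Q (j+1) = Q ⟨j, hj⟩ := by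
    intro j hj
    have h1 : 1 ≤ j+1 ∧ j+1 ≤ n := by omega
    simp only [pad1, dif_pos h1, Nat.add_sub_cancel]
  have hw : ∀ (j:ℕ) (hj : j < n-1), pad1 W (j+1) = W ⟨j, hj⟩ := by
    intro j hj
    have h1 : 1 ≤ j+1 ∧ j+1 ≤ n-1 := by omega
    simp only [pad1, dif_pos h1, Nat.add_sub_cancel]
  have hqn : pad1 Q n = Q ⟨n-1, by omega⟩ := by
    simp only [pad1, dif_pos (show 1 ≤ n ∧ n ≤ n by omega)]
  have hq0 : pad1 Q 0 = 0 := by simp [pad1]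
  have hm : ∀ (j:ℕ) (hj : j < n-1),
      mconv n (pad1 Q) (pad1 W) (j+1) = min (Q ⟨j, by omega⟩) (W ⟨j, hj⟩) := by
    intro j hj
    rw [mconv, if_neg (by omega), if_neg (by omega), hq j (by omega), hw j hj]
  have hmn : mconv n (pad1 Q) (pad1 W) n = Q ⟨n-1, by omega⟩ := by
    rw [mconv, if_neg (by omega), if_pos rfl, hqn]
  have hm0 : mconv n (pad1 Q) (pad1 W) 0 = 0 := by rw [mconv, if_pos rfl]
  -- closed forms
  have cl0 : ∀ ε ∈ Set.Ioi (0:ℝ),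
      I' ε ⟨0, by omega⟩ = I ε ⟨0, by omega⟩ + U ε ⟨0, by omega⟩ :=
    fun ε hε => entry00 hn _ _ _ _ (heq ε hε)
  have clMid : ∀ (s:ℕ) (hs : s+1 ≤ n-2), ∀ ε ∈ Set.Ioi (0:ℝ),
      I' ε ⟨s+1, by omega⟩ =
        (I ε ⟨s+1, by omega⟩ + U ε ⟨s+1, by omega⟩) * I ε ⟨s, by omega⟩
          / (I ε ⟨s, by omega⟩ + U ε ⟨s, by omega⟩) := by
    intro s hs ε hε
    have eM := entryMid hn _ _ _ _ (heq ε hε) s hs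
    have eS := entrySub hn _ _ _ _ (heq ε hε) s (by omega)
    have ha : 0 < I ε ⟨s, by omega⟩ := hIpos ε hε _
    have hb : 0 < U ε ⟨s, by omega⟩ := hUpos ε hε _
    rw [eq_div_iff (by positivity)]
    linear_combination (-1 : ℝ) * eS - I ε ⟨s, by omega⟩ * eM
  have clLast : ∀ ε ∈ Set.Ioi (0:ℝ),
      I' ε ⟨n-1, by omega⟩ =
        I ε ⟨n-1, by omega⟩ * I ε ⟨n-2, by omega⟩
          / (I ε ⟨n-2, by omega⟩ + U ε ⟨n-2, by omega⟩) := by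
    intro ε hε
    have eL := entryLast hn _ _ _ _ (heq ε hε)
    have eS := entrySub hn _ _ _ _ (heq ε hε) (n-2) (by omega)
    simp only [show n-2+1 = n-1 by omega] at eS
    have ha : 0 < I ε ⟨n-2, by omega⟩ := hIpos ε hε _
    have hb : 0 < U ε ⟨n-2, by omega⟩ := hUpos ε hε _
    rw [eq_div_iff (by positivity)]
    linear_combination (-1 : ℝ) * eS - I ε ⟨n-2, by omega⟩ * eL
  have clU : ∀ (s:ℕ) (hs : s ≤ n-2), ∀ ε ∈ Set.Ioi (0:ℝ),
      U' ε ⟨s, by omega⟩ = U ε ⟨s, by omega⟩ * I' ε ⟨s+1, by omega⟩ / I ε ⟨s, by omega⟩ := by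
    intro s hs ε hε
    have eS := entrySub hn _ _ _ _ (heq ε hε) s (by omega)
    have ha : 0 < I ε ⟨s, by omega⟩ := hIpos ε hε _
    rw [eq_div_iff ha.ne']
    linear_combination eS
  -- part 1
  have key1 : ∀ r : Fin n, TropLimit (fun ε => I' ε r)
      (mconv n (pad1 Q) (pad1 W) ((r:ℕ)+1) - mconv n (pad1 Q) (pad1 W) (r:ℕ)
        + pad1 Q (r:ℕ)) := by
    rintro ⟨v, hv⟩
    simp only [Fin.val_mk]
    rcases Nat.eq_zero_or_pos v with rfl | hpos
    · have hval : mconv n (pad1 Q) (pad1 W) (0+1) - mconv n (pad1 Q) (pad1 W) 0 + pad1 Q 0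
          = min (Q ⟨0, by omega⟩) (W ⟨0, by omega⟩) := by
        rw [hm 0 (by omega), hm0, hq0]; ring
      rw [hval]
      refine trop_congr (fun ε hε => (cl0 ε hε).symm) ?_
      exact trop_add (fun ε hε => hIpos ε hε _) (fun ε hε => hUpos ε hε _) (hQ _) (hW _)
    · rcases eq_or_lt_of_le (show v ≤ n-1 by omega) with hlast | hlt
      · subst hlast
        have hqq : pad1 Q (n-1) = Q ⟨n-2, by omega⟩ := by
          simp only [pad1, dif_pos (show 1 ≤ n-1 ∧ n-1 ≤ n by omega)]
          exact congrArg Q (Fin.ext (by simp only [Fin.val_mk]; omega))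
        have hww : pad1 W (n-1) = W ⟨n-2, by omega⟩ := by
          simp only [pad1, dif_pos (show 1 ≤ n-1 ∧ n-1 ≤ n-1 by omega)]
          exact congrArg W (Fin.ext (by simp only [Fin.val_mk]; omega))
        have hmm : mconv n (pad1 Q) (pad1 W) (n-1)
            = min (Q ⟨n-2, by omega⟩) (W ⟨n-2, by omega⟩) := by
          rw [mconv, if_neg (by omega), if_neg (by omega), hqq, hww]
        have hval : mconv n (pad1 Q) (pad1 W) (n-1+1) - mconv n (pad1 Q) (pad1 W) (n-1)
              + pad1 Q (n-1)
            = Q ⟨n-1, by omega⟩ + Q ⟨n-2, by omega⟩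
              - min (Q ⟨n-2, by omega⟩) (W ⟨n-2, by omega⟩) := by
          rw [show n-1+1 = n by omega, hmn, hmm, hqq]
          ring
        rw [hval]
        refine trop_congr (fun ε hε => (clLast ε hε).symm) ?_
        refine trop_div ?_ ?_ (trop_mul ?_ ?_ (hQ _) (hQ _))
          (trop_add ?_ ?_ (hQ _) (hW _)) <;>
          intro ε hε
        · exact mul_pos (hIpos ε hε _) (hIpos ε hε _)
        · exact add_pos (hIpos ε hε _) (hUpos ε hε _)
        · exact hIpos ε hε _
        · exact hIpos ε hε _
        · exact hIpos ε hε _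
        · exact hUpos ε hε _
      · obtain ⟨s, rfl⟩ : ∃ s, v = s+1 := ⟨v-1, by omega⟩
        have hs : s+1 ≤ n-2 := by omega
        have hval : mconv n (pad1 Q) (pad1 W) (s+1+1) - mconv n (pad1 Q) (pad1 W) (s+1)
              + pad1 Q (s+1)
            = (min (Q ⟨s+1, by omega⟩) (W ⟨s+1, by omega⟩) + Q ⟨s, by omega⟩)
              - min (Q ⟨s, by omega⟩) (W ⟨s, by omega⟩) := by
          rw [hm (s+1) (by omega), hm s (by omega), hq s (by omega)]
          ring
        rw [hval]
        refine trop_congr (fun ε hε => (clMid s hs ε hε).symm) ?_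
        refine trop_div ?_ ?_
          (trop_mul ?_ ?_ (trop_add ?_ ?_ (hQ _) (hW _)) (hQ _))
          (trop_add ?_ ?_ (hQ _) (hW _)) <;>
          intro ε hε
        · exact mul_pos (add_pos (hIpos ε hε _) (hUpos ε hε _)) (hIpos ε hε _)
        · exact add_pos (hIpos ε hε _) (hUpos ε hε _)
        · exact add_pos (hIpos ε hε _) (hUpos ε hε _)
        · exact hIpos ε hε _
        · exact hIpos ε hε _
        · exact hUpos ε hε _
        · exact hIpos ε hε _
        · exact hUpos ε hε _
  -- part 2
  have key2 : ∀ r : Fin (n-1), TropLimit (fun ε => U' ε r)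
      (mconv n (pad1 Q) (pad1 W) ((r:ℕ)+2) - mconv n (pad1 Q) (pad1 W) ((r:ℕ)+1)
        + pad1 W ((r:ℕ)+1)) := by
    rintro ⟨v, hv⟩
    simp only [Fin.val_mk]
    have hIv := key1 ⟨v+1, by omega⟩
    simp only [Fin.val_mk] at hIv
    have hval : mconv n (pad1 Q) (pad1 W) (v+2) - mconv n (pad1 Q) (pad1 W) (v+1)
          + pad1 W (v+1)
        = (W ⟨v, hv⟩
            + (mconv n (pad1 Q) (pad1 W) (v+1+1) - mconv n (pad1 Q) (pad1 W) (v+1)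
              + pad1 Q (v+1)))
          - Q ⟨v, by omega⟩ := by
      rw [show v+1+1 = v+2 by omega, hq v (by omega), hw v hv]
      ring
    rw [hval]
    refine trop_congr (fun ε hε => (clU v (by omega) ε hε).symm) ?_
    refine trop_div ?_ ?_ (trop_mul ?_ ?_ (hW _) hIv) (hQ _) <;> intro ε hε
    · exact mul_pos (hUpos ε hε _) (hI'pos ε hε _)
    · exact hIpos ε hε _
    · exact hUpos ε hε _
    · exact hI'pos ε hε _
  refine ⟨fun r => mconv n (pad1 Q) (pad1 W) ((r:ℕ)+1) - mconv n (pad1 Q) (pad1 W) (r:ℕ)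
      + pad1 Q (r:ℕ),
    fun r => mconv n (pad1 Q) (pad1 W) ((r:ℕ)+2) - mconv n (pad1 Q) (pad1 W) ((r:ℕ)+1)
      + pad1 W ((r:ℕ)+1), key1, key2, ?_, ?_⟩
  · intro i hi
    rw [hpad _ i (by omega)]
  · intro i h1 h2
    obtain ⟨s, rfl⟩ : ∃ s, i = s+1 := ⟨i-1, by omega⟩
    rw [hpad _ s (by omega)]
end

section
/- Let n ≥ 1 and 0 ≤ N ≤ n−1. Let I = (I_1,…,I_n) be a vector of positive reals and, for 1 ≤ m ≤ N+1, let U_m = (U_{m,1},…,U_{m,n−m}) be vectors of positive reals. Then there exist a unique real vector I' = (I'_1,…,I'_n) and unique real vectors U'_m = (U'_{m,1},…,U'_{m,n−m}) for 1 ≤ m ≤ N+1 such that F_{N+1}(U'_{N+1})···F_2(U'_2)F_1(U'_1)E(I) = E(I')F_{N+1}(U_{N+1})···F_2(U_2)F_1(U_1) as n×n real matrices; moreover all entries of I' and of the U'_m are positive. -/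
/-- The product F(V_N) ⋯ F(V_1) F(V_0). -/
def prodF1 (n : ℕ) (V : ℕ → Fin (n - 1) → ℝ) : ℕ → Matrix (Fin n) (Fin n) ℝ
  | 0 => Fkmatrix n 1 (V 0)
  | (N+1) => Fkmatrix n 1 (V (N+1)) * prodF1 n V N

/-- The product F_{N+1}(U_{N+1}) ⋯ F_2(U_2) F_1(U_1), where `U m` stands for
the vector U_{m+1} : Fin (n−(m+1)) → ℝ. -/
def prodFk (n : ℕ) (U : (m : ℕ) → Fin (n - (m+1)) → ℝ) : ℕ → Matrix (Fin n) (Fin n) ℝ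
  | 0 => Fkmatrix n 1 (U 0)
  | (N+1) => Fkmatrix n (N+2) (U (N+1)) * prodFk n U N


/-!
Existence: one factor at a time. For a positive diagonal `J` and a unit lower bidiagonal `L(f)`
with `f ≥ 0`, the entries of `L(g) E(J) = E(J') L(f)` determine `J'` and `g` explicitly, and both
are positive; pushing `E(I)` leftwards through `F_1, …, F_{N+1}` in turn gives `I'` and the `U'_m`.

Uniqueness: `P = F_{N+1}(U_{N+1}) ⋯ F_1(U_1)` is unit lower triangular with checkerboard signs.
If `A E(I) = E(I'') P` and `B E(I) = E(I') P` with `A`, `B` unit lower triangular, row `r` of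
`(A - B) E(I) = diag(I'' - I') P` forces `-(I''_r - I'_r)² ≥ 0`. Cancelling the invertible `E(I)`
leaves an equality of two products of `F_m`'s; such a product has lower bandwidth `N + 1` with
outermost band entries `∏ₘ (-U_{m,j}) ≠ 0`, which pins down the outermost factor row by row.
-/

namespace BidiagonalExchange

variable {n : ℕ}

/-- Entries indexed by `ℕ`, with value `0` outside `Fin n × Fin n`, so that shifted indices such
as `i + 1` need no bounds proofs. -/
def entry (M : Matrix (Fin n) (Fin n) ℝ) (i j : ℕ) : ℝ :=
  if h : i < n ∧ j < n then M ⟨i, h.1⟩ ⟨j, h.2⟩ else 0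

lemma entry_of_le_left (M : Matrix (Fin n) (Fin n) ℝ) {i : ℕ} (j : ℕ) (h : n ≤ i) :
    entry M i j = 0 :=
  dif_neg (by omega)

lemma entry_of_le_right (M : Matrix (Fin n) (Fin n) ℝ) (i : ℕ) {j : ℕ} (h : n ≤ j) :
    entry M i j = 0 :=
  dif_neg (by omega)

@[simp] lemma entry_val (M : Matrix (Fin n) (Fin n) ℝ) (i j : Fin n) :
    entry M i j = M i j :=
  dif_pos ⟨i.2, j.2⟩

lemma matrix_ext_entry {M M' : Matrix (Fin n) (Fin n) ℝ}
    (h : ∀ i j, i < n → j < n → entry M i j = entry M' i j) : M = M' := by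
  ext i j
  simpa using h i j i.2 j.2

lemma entry_mul (A M : Matrix (Fin n) (Fin n) ℝ) (i j : ℕ) :
    entry (A * M) i j = ∑ k ∈ Finset.range n, entry A i k * entry M k j := by
  by_cases hi : i < n
  · by_cases hj : j < n
    · lift i to Fin n using hi
      lift j to Fin n using hj
      rw [Finset.sum_range (fun k => entry A i k * entry M k j)]
      simp [Matrix.mul_apply]
    · simp [entry_of_le_right _ _ (not_lt.mp hj)]
  · simp [entry_of_le_left _ _ (not_lt.mp hi)]

lemma entry_mul_eq_add {A M : Matrix (Fin n) (Fin n) ℝ} {i j : ℕ} (p q : ℕ) (hpq : p ≠ q)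
    (h : ∀ k, k ≠ p → k ≠ q → entry A i k * entry M k j = 0) :
    entry (A * M) i j = entry A i p * entry M p j + entry A i q * entry M q j := by
  rw [entry_mul]
  refine Finset.sum_eq_add p q hpq (fun k _ hk => h k hk.1 hk.2) ?_ ?_ <;>
    exact fun hk => by rw [entry_of_le_right _ _ (by simpa using hk), zero_mul]

lemma padded_of_lt {m : ℕ} (V : Fin m → ℝ) {t : ℕ} (h : t < m) : padded V t = V ⟨t, h⟩ :=
  dif_pos h

lemma padded_of_le {m : ℕ} (V : Fin m → ℝ) {t : ℕ} (h : m ≤ t) : padded V t = 0 :=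
  dif_neg (by omega)

lemma entry_Ematrix (I : Fin n → ℝ) (i j : ℕ) :
    entry (Ematrix n I) i j =
      if j = i then padded I i else if j = i + 1 ∧ j < n then 1 else 0 := by
  unfold entry padded
  split_ifs <;> simp_all [Ematrix]; omega

lemma entry_mul_Ematrix_zero (M : Matrix (Fin n) (Fin n) ℝ) (I : Fin n → ℝ) (i : ℕ) :
    entry (M * Ematrix n I) i 0 = entry M i 0 * padded I 0 := by
  rw [entry_mul_eq_add 0 1 one_ne_zero.symm
    (fun k hk0 hk1 => by rw [entry_Ematrix]; split_ifs <;> simp_all),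
    entry_Ematrix, entry_Ematrix]
  simp

lemma entry_mul_Ematrix_succ (M : Matrix (Fin n) (Fin n) ℝ) (I : Fin n → ℝ) (i : ℕ) {j : ℕ}
    (h : j + 1 < n) :
    entry (M * Ematrix n I) i (j + 1) =
      entry M i (j + 1) * padded I (j + 1) + entry M i j := by
  rw [entry_mul_eq_add (j + 1) j (by omega)
    (fun k hk hk' => by rw [entry_Ematrix]; split_ifs <;> simp_all),
    entry_Ematrix, entry_Ematrix]
  simp [h]

lemma entry_Ematrix_mul (I : Fin n → ℝ) (M : Matrix (Fin n) (Fin n) ℝ) (i j : ℕ) :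
    entry (Ematrix n I * M) i j = padded I i * entry M i j + entry M (i + 1) j := by
  rw [entry_mul_eq_add i (i + 1) (by omega)
    (fun k hk hk' => by rw [entry_Ematrix]; split_ifs <;> simp_all),
    entry_Ematrix, entry_Ematrix]
  by_cases h : i + 1 < n
  · simp [h]
  · simp [h, entry_of_le_left M j (not_lt.mp h)]

def unitLowerBidiag (n : ℕ) (f : ℕ → ℝ) : Matrix (Fin n) (Fin n) ℝ :=
  Matrix.of fun r c => if (r : ℕ) = c then 1 else if (r : ℕ) = c + 1 then -f c else 0

lemma entry_unitLowerBidiag (f : ℕ → ℝ) (i j : ℕ) :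
    entry (unitLowerBidiag n f) i j =
      if i = j ∧ i < n then 1 else if i = j + 1 ∧ i < n then -f j else 0 := by
  unfold entry
  split_ifs <;> simp_all [unitLowerBidiag] <;> omega

lemma entry_unitLowerBidiag_mul_zero (f : ℕ → ℝ) (M : Matrix (Fin n) (Fin n) ℝ) (j : ℕ) :
    entry (unitLowerBidiag n f * M) 0 j = entry M 0 j := by
  rw [entry_mul_eq_add 0 1 one_ne_zero.symm
    (fun k hk0 hk1 => by rw [entry_unitLowerBidiag]; split_ifs <;> simp_all),
    entry_unitLowerBidiag, entry_unitLowerBidiag]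
  by_cases h : 0 < n
  · simp [h]
  · simp [entry_of_le_left M j (not_lt.mp h)]

lemma entry_unitLowerBidiag_mul_succ (f : ℕ → ℝ) (M : Matrix (Fin n) (Fin n) ℝ) {i : ℕ}
    (j : ℕ) (h : i + 1 < n) :
    entry (unitLowerBidiag n f * M) (i + 1) j = entry M (i + 1) j - f i * entry M i j := by
  rw [entry_mul_eq_add (i + 1) i (by omega)
    (fun k hk hk' => by rw [entry_unitLowerBidiag]; split_ifs <;> simp_all),
    entry_unitLowerBidiag, entry_unitLowerBidiag]
  simp [h]
  ring

lemma entry_one (i j : ℕ) :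
    entry (1 : Matrix (Fin n) (Fin n) ℝ) i j = if i = j ∧ i < n then 1 else 0 := by
  unfold entry
  split_ifs <;> simp_all [Matrix.one_apply, Fin.ext_iff]; omega

section LeftMulUnitLowerBidiag

variable (f : ℕ → ℝ) {M : Matrix (Fin n) (Fin n) ℝ}

lemma entry_unitLowerBidiag_mul_of_lt (hM : ∀ i j, i < j → entry M i j = 0) {i j : ℕ}
    (hij : i < j) : entry (unitLowerBidiag n f * M) i j = 0 := by
  rcases Nat.lt_or_ge i n with hi | hi
  · cases i with
    | zero => rw [entry_unitLowerBidiag_mul_zero, hM 0 j hij]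
    | succ i =>
      rw [entry_unitLowerBidiag_mul_succ f M j hi, hM _ _ hij, hM i j (by omega)]; ring
  · exact entry_of_le_left _ _ hi

lemma entry_unitLowerBidiag_mul_self (hM : ∀ i j, i < j → entry M i j = 0)
    (hM' : ∀ i, i < n → entry M i i = 1) {i : ℕ} (hi : i < n) :
    entry (unitLowerBidiag n f * M) i i = 1 := by
  cases i with
  | zero => rw [entry_unitLowerBidiag_mul_zero, hM' 0 hi]
  | succ i =>
    rw [entry_unitLowerBidiag_mul_succ f M _ hi, hM' _ hi, hM i (i + 1) (by omega)]; ring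

lemma entry_unitLowerBidiag_mul_of_add_lt {w : ℕ} (hM : ∀ i j, j + w < i → entry M i j = 0)
    {i j : ℕ} (hij : j + w + 1 < i) : entry (unitLowerBidiag n f * M) i j = 0 := by
  obtain ⟨i, rfl⟩ : ∃ i', i = i' + 1 := ⟨i - 1, by omega⟩
  rcases Nat.lt_or_ge (i + 1) n with hi | hi
  · rw [entry_unitLowerBidiag_mul_succ f M j hi, hM _ _ (by omega), hM i j (by omega)]; ring
  · exact entry_of_le_left _ _ hi

lemma entry_unitLowerBidiag_mul_add {w : ℕ} (hM : ∀ i j, j + w < i → entry M i j = 0) {j : ℕ}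
    (hj : j + w + 1 < n) :
    entry (unitLowerBidiag n f * M) (j + w + 1) j = -f (j + w) * entry M (j + w) j := by
  rw [entry_unitLowerBidiag_mul_succ f M j hj, hM _ _ (by omega)]; ring

lemma sign_entry_unitLowerBidiag_mul (hf : ∀ t, 0 ≤ f t) (hM : ∀ i j, i < j → entry M i j = 0)
    (hM' : ∀ i j, 0 ≤ (-1 : ℝ) ^ (i - j) * entry M i j) (i j : ℕ) :
    0 ≤ (-1 : ℝ) ^ (i - j) * entry (unitLowerBidiag n f * M) i j := by
  rcases Nat.lt_or_ge i n with hi | hi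
  · cases i with
    | zero => rw [entry_unitLowerBidiag_mul_zero]; exact hM' 0 j
    | succ i =>
      rw [entry_unitLowerBidiag_mul_succ f M j hi]
      rcases Nat.lt_or_ge i j with hij | hij
      · simpa [hM i j hij] using hM' (i + 1) j
      · have hpow : (-1 : ℝ) ^ (i + 1 - j) = -(-1) ^ (i - j) := by
          rw [show i + 1 - j = i - j + 1 by omega, pow_succ]; ring
        have := mul_nonneg (hf i) (hM' i j)
        have := hM' (i + 1) j
        rw [hpow] at this ⊢
        nlinarith
  · rw [entry_of_le_left _ _ hi, mul_zero]

end LeftMulUnitLowerBidiag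

def subdiag (k : ℕ) (V : Fin (n - k) → ℝ) (c : ℕ) : ℝ :=
  if k ≤ c + 1 then padded V (c + 1 - k) else 0

lemma Fkmatrix_eq_unitLowerBidiag (k : ℕ) (V : Fin (n - k) → ℝ) :
    Fkmatrix n k V = unitLowerBidiag n (subdiag k V) := by
  ext r c
  simp only [Fkmatrix, unitLowerBidiag, subdiag, Matrix.of_apply]
  split_ifs <;> simp_all

lemma subdiag_of_lt {k : ℕ} (V : Fin (n - k) → ℝ) {c : ℕ} (h : c + 1 < k) :
    subdiag k V c = 0 :=
  if_neg (by omega)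

lemma subdiag_of_le {k : ℕ} (V : Fin (n - k) → ℝ) {c : ℕ} (h : n ≤ c + 1) :
    subdiag k V c = 0 := by
  unfold subdiag
  split_ifs
  · exact padded_of_le V (by omega)
  · rfl

lemma subdiag_add_succ {k : ℕ} (V : Fin (n - (k + 1)) → ℝ) (t : ℕ) :
    subdiag (k + 1) V (t + k) = padded V t := by
  simp [subdiag]

lemma subdiag_nonneg {k : ℕ} {V : Fin (n - k) → ℝ} (hV : ∀ t, 0 ≤ V t) (c : ℕ) :
    0 ≤ subdiag k V c := by
  unfold subdiag padded
  split_ifs <;> simp [hV]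

section prodFk

variable (U : (m : ℕ) → Fin (n - (m + 1)) → ℝ)

/-- Written with a factor `1` so that the base cases of the inductions below are instances of
the inductive step. -/
lemma prodFk_zero_eq : prodFk n U 0 = unitLowerBidiag n (subdiag 1 (U 0)) * 1 := by
  rw [prodFk, mul_one, Fkmatrix_eq_unitLowerBidiag]

lemma prodFk_succ_eq (N : ℕ) :
    prodFk n U (N + 1) = unitLowerBidiag n (subdiag (N + 2) (U (N + 1))) * prodFk n U N := by
  rw [prodFk, Fkmatrix_eq_unitLowerBidiag]

lemma prodFk_congr {U U' : (m : ℕ) → Fin (n - (m + 1)) → ℝ} {N : ℕ}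
    (h : ∀ m, m ≤ N → U m = U' m) : prodFk n U N = prodFk n U' N := by
  induction N with
  | zero => rw [prodFk, prodFk, h 0 le_rfl]
  | succ N ih => rw [prodFk, prodFk, h (N + 1) le_rfl, ih fun m hm => h m (by omega)]

lemma entry_prodFk_of_lt (N : ℕ) {i j : ℕ} (hij : i < j) : entry (prodFk n U N) i j = 0 := by
  induction N generalizing i j with
  | zero =>
    rw [prodFk_zero_eq]
    exact entry_unitLowerBidiag_mul_of_lt _ (fun i j h => by simp [entry_one]; omega) hij
  | succ N ih =>
    rw [prodFk_succ_eq]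
    exact entry_unitLowerBidiag_mul_of_lt _ (fun i j h => ih h) hij

lemma entry_prodFk_self (N : ℕ) {i : ℕ} (hi : i < n) : entry (prodFk n U N) i i = 1 := by
  induction N generalizing i with
  | zero =>
    rw [prodFk_zero_eq]
    exact entry_unitLowerBidiag_mul_self _ (fun i j h => by simp [entry_one]; omega)
      (fun i hi => by simp [entry_one, hi]) hi
  | succ N ih =>
    rw [prodFk_succ_eq]
    exact entry_unitLowerBidiag_mul_self _ (fun i j h => entry_prodFk_of_lt U N h)
      (fun i hi => ih hi) hi

lemma entry_prodFk_of_add_lt (N : ℕ) {i j : ℕ} (hij : j + N + 1 < i) :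
    entry (prodFk n U N) i j = 0 := by
  induction N generalizing i j with
  | zero =>
    rw [prodFk_zero_eq]
    exact entry_unitLowerBidiag_mul_of_add_lt (w := 0) _
      (fun i j h => by simp [entry_one]; omega) hij
  | succ N ih =>
    rw [prodFk_succ_eq]
    exact entry_unitLowerBidiag_mul_of_add_lt _ (fun i j h => ih h) hij

lemma entry_prodFk_add (N : ℕ) {j : ℕ} (hj : j + N + 1 < n) :
    entry (prodFk n U N) (j + N + 1) j = ∏ m ∈ Finset.range (N + 1), -padded (U m) j := by
  induction N with
  | zero =>
    rw [prodFk_zero_eq, entry_unitLowerBidiag_mul_add (w := 0) _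
      (fun i j h => by simp [entry_one]; omega) hj]
    simp [entry_one, show j < n by omega, subdiag]
  | succ N ih =>
    rw [prodFk_succ_eq,
      entry_unitLowerBidiag_mul_add _ (fun i j h => entry_prodFk_of_add_lt U N h) hj, ← add_assoc,
      ih (by omega), Finset.prod_range_succ _ (N + 1),
      show subdiag (N + 2) (U (N + 1)) (j + N + 1) = padded (U (N + 1)) j from
        subdiag_add_succ (U (N + 1)) j]
    ring

lemma sign_entry_prodFk {N : ℕ} (hU : ∀ m, m ≤ N → ∀ t, 0 ≤ U m t) (i j : ℕ) :
    0 ≤ (-1 : ℝ) ^ (i - j) * entry (prodFk n U N) i j := by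
  induction N generalizing i j with
  | zero =>
    rw [prodFk_zero_eq]
    refine sign_entry_unitLowerBidiag_mul _ (subdiag_nonneg (hU 0 le_rfl))
      (fun i j h => by simp [entry_one]; omega) (fun i j => ?_) i j
    rw [entry_one]
    split_ifs with h
    · simp [h.1]
    · simp
  | succ N ih =>
    rw [prodFk_succ_eq]
    exact sign_entry_unitLowerBidiag_mul _ (subdiag_nonneg (hU (N + 1) le_rfl))
      (fun i j h => entry_prodFk_of_lt U N h) (ih fun m hm => hU m (by omega)) i j

end prodFk

lemma isUnit_Ematrix {I : Fin n → ℝ} (hI : ∀ i, I i ≠ 0) : IsUnit (Ematrix n I) := by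
  have hupper : (Ematrix n I).IsUpperTriangular := fun i j (h : j < i) => by
    simp only [Ematrix, Matrix.of_apply]
    rw [if_neg (by omega), if_neg (by omega)]
  rw [Matrix.isUnit_iff_isUnit_det, Matrix.det_of_isUpperTriangular hupper, isUnit_iff_ne_zero]
  exact Finset.prod_ne_zero_iff.mpr fun i _ => by simpa [Ematrix] using hI i

lemma sign_mul_of_recurrence {x p w : ℕ → ℝ} {d : ℝ} {s : ℕ} (hw : ∀ c, c < s → 0 < w c)
    (hp : ∀ c, 0 ≤ (-1 : ℝ) ^ (s - c) * p c) (h0 : x 0 * w 0 = d * p 0)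
    (hsucc : ∀ c, c + 1 < s → x (c + 1) * w (c + 1) + x c = d * p (c + 1)) :
    ∀ c, c < s → 0 ≤ (-1 : ℝ) ^ (s - c) * (d * x c) := by
  intro c hc
  induction c with
  | zero =>
    have hx : x 0 = d * p 0 / w 0 := by rw [← h0, mul_div_cancel_right₀ _ (hw 0 hc).ne']
    rw [hx, show (-1 : ℝ) ^ (s - 0) * (d * (d * p 0 / w 0))
      = d ^ 2 * ((-1) ^ (s - 0) * p 0) / w 0 by ring]
    exact div_nonneg (mul_nonneg (sq_nonneg d) (hp 0)) (hw 0 hc).le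
  | succ c ih =>
    have hw' := hw (c + 1) hc
    have hx : x (c + 1) = (d * p (c + 1) - x c) / w (c + 1) := by
      rw [← hsucc c hc, add_sub_cancel_right, mul_div_cancel_right₀ _ hw'.ne']
    have hpow : (-1 : ℝ) ^ (s - c) = -(-1) ^ (s - (c + 1)) := by
      rw [show s - c = s - (c + 1) + 1 by omega, pow_succ]; ring
    have ih' := ih (by omega)
    rw [hpow] at ih'
    rw [hx, show (-1 : ℝ) ^ (s - (c + 1)) * (d * ((d * p (c + 1) - x c) / w (c + 1)))
      = (d ^ 2 * ((-1) ^ (s - (c + 1)) * p (c + 1)) + -(-1) ^ (s - (c + 1)) * (d * x c))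
        / w (c + 1) by ring]
    exact div_nonneg (add_nonneg (mul_nonneg (sq_nonneg d) (hp _)) ih') hw'.le

lemma eq_of_mul_Ematrix_eq {A B P : Matrix (Fin n) (Fin n) ℝ} {I J J' : Fin n → ℝ}
    (hI : ∀ i, 0 < I i) (hAB : ∀ i, i < n → entry A i i = entry B i i)
    (hP : ∀ i, i < n → entry P i i = 1) (hPsign : ∀ i j, 0 ≤ (-1 : ℝ) ^ (i - j) * entry P i j)
    (hA : A * Ematrix n I = Ematrix n J * P) (hB : B * Ematrix n I = Ematrix n J' * P) :
    J = J' := by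
  -- Row `r` of `(A - B) E(I) = diag(J - J') P` is a recurrence for `x r` driven by `d r • P`;
  -- the sign pattern of `P` propagates to `d r * x r`, and `x r (r - 1) = d r` then gives
  -- `-(d r)² ≥ 0`.
  set x : ℕ → ℕ → ℝ := fun r c => entry A r c - entry B r c
  set d : ℕ → ℝ := fun r => padded J r - padded J' r
  have hcol : ∀ r c, entry (A * Ematrix n I) r c - entry (B * Ematrix n I) r c
      = d r * entry P r c := by
    intro r c
    rw [hA, hB, entry_Ematrix_mul, entry_Ematrix_mul]; ring
  have h0 : ∀ r, x r 0 * padded I 0 = d r * entry P r 0 := by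
    intro r
    rw [← hcol, entry_mul_Ematrix_zero, entry_mul_Ematrix_zero]; ring
  have hsucc : ∀ r c, c + 1 < n →
      x r (c + 1) * padded I (c + 1) + x r c = d r * entry P r (c + 1) := by
    intro r c hc
    rw [← hcol, entry_mul_Ematrix_succ _ _ _ hc, entry_mul_Ematrix_succ _ _ _ hc]; ring
  have hxself : ∀ r, r < n → x r r = 0 := fun r hr => sub_eq_zero.mpr (hAB r hr)
  have hd : ∀ r, r < n → d r = 0 := by
    intro r hr
    cases r with
    | zero => simpa [hxself 0 hr, hP 0 hr] using (h0 0).symm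
    | succ s =>
      have hxs : x (s + 1) s = d (s + 1) := by
        simpa [hxself _ hr, hP _ hr] using hsucc (s + 1) s hr
      have hsign := sign_mul_of_recurrence (x := x (s + 1)) (hw := fun c hc => by
          rw [padded_of_lt I (by omega)]; exact hI _) (hPsign (s + 1)) (h0 _)
          (fun c hc => hsucc _ _ (by omega)) s (by omega)
      rw [show s + 1 - s = 1 by omega, pow_one, hxs] at hsign
      nlinarith [sq_nonneg (d (s + 1))]
  funext i
  have := hd i i.2
  simp only [d, padded_of_lt _ i.2] at this
  exact sub_eq_zero.mp this

lemma unitLowerBidiag_mul_cancel {f g : ℕ → ℝ} {Q Q' : Matrix (Fin n) (Fin n) ℝ} {w : ℕ}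
    (hf : ∀ t, t < w → f t = 0) (hg : ∀ t, t < w → g t = 0)
    (hQ : ∀ i j, j + w < i → entry Q i j = 0) (hQ' : ∀ i j, j + w < i → entry Q' i j = 0)
    (hQ'ne : ∀ j, j + w < n → entry Q' (j + w) j ≠ 0)
    (h : unitLowerBidiag n f * Q = unitLowerBidiag n g * Q') :
    (∀ t, t + 1 < n → f t = g t) ∧ Q = Q' := by
  -- Once rows `≤ i` of `Q` and `Q'` agree, column `i - w` of row `i + 1` reads `f i * q = g i * q`
  -- with `q = entry Q' i (i - w) ≠ 0`; then row `i + 1` agrees as well.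
  have hsucc : ∀ i j, i + 1 < n →
      entry Q (i + 1) j - f i * entry Q i j = entry Q' (i + 1) j - g i * entry Q' i j := by
    intro i j hi
    rw [← entry_unitLowerBidiag_mul_succ f Q j hi, ← entry_unitLowerBidiag_mul_succ g Q' j hi,
      h]
  have hcoeff : ∀ i, i + 1 < n → (∀ j, entry Q i j = entry Q' i j) → f i = g i := by
    intro i hi hrow
    rcases Nat.lt_or_ge i w with hiw | hiw
    · rw [hf i hiw, hg i hiw]
    · obtain ⟨j, rfl⟩ : ∃ j, i = j + w := ⟨i - w, by omega⟩
      have := hsucc (j + w) j hi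
      rw [hQ _ _ (by omega), hQ' _ _ (by omega), hrow] at this
      exact mul_right_cancel₀ (hQ'ne j (by omega)) (by linarith)
  have hrows : ∀ i j, entry Q i j = entry Q' i j := by
    intro i
    induction i with
    | zero =>
      intro j
      rw [← entry_unitLowerBidiag_mul_zero f Q, h, entry_unitLowerBidiag_mul_zero]
    | succ i ih =>
      intro j
      rcases Nat.lt_or_ge (i + 1) n with hi | hi
      · have := hsucc i j hi
        rw [ih, hcoeff i hi ih] at this
        linarith
      · rw [entry_of_le_left _ _ hi, entry_of_le_left _ _ hi]
  exact ⟨fun t ht => hcoeff t ht (hrows t), matrix_ext_entry fun i j _ _ => hrows i j⟩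

lemma eq_of_subdiag_eq {k : ℕ} {V W : Fin (n - (k + 1)) → ℝ}
    (h : ∀ t, t + 1 < n → subdiag (k + 1) V t = subdiag (k + 1) W t) : V = W := by
  funext t
  have := h (t + k) (by omega)
  rwa [subdiag_add_succ, subdiag_add_succ, padded_of_lt _ t.2, padded_of_lt _ t.2] at this

lemma prodFk_injective {U V : (m : ℕ) → Fin (n - (m + 1)) → ℝ} {N : ℕ}
    (hV : ∀ m, m ≤ N → ∀ t, V m t ≠ 0) (h : prodFk n U N = prodFk n V N) :
    ∀ m, m ≤ N → U m = V m := by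
  induction N with
  | zero =>
    rw [prodFk_zero_eq, prodFk_zero_eq] at h
    have hband : ∀ i j, j + 0 < i → entry (1 : Matrix (Fin n) (Fin n) ℝ) i j = 0 := by
      intro i j hij; simp [entry_one]; omega
    have hsub := (unitLowerBidiag_mul_cancel (by simp) (by simp) hband hband
      (fun j hj => by simp [entry_one]; omega) h).1
    intro m hm
    obtain rfl : m = 0 := by omega
    exact eq_of_subdiag_eq (k := 0) hsub
  | succ N ih =>
    rw [prodFk_succ_eq, prodFk_succ_eq] at h
    have hne : ∀ j, j + (N + 1) < n → entry (prodFk n V N) (j + (N + 1)) j ≠ 0 := by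
      intro j hj
      refine (entry_prodFk_add V N hj).trans_ne (Finset.prod_ne_zero_iff.mpr fun m hm => ?_)
      have hm := Finset.mem_range.mp hm
      rw [neg_ne_zero, padded_of_lt _ (by omega)]
      exact hV m (by omega) _
    obtain ⟨hsub, hrest⟩ := unitLowerBidiag_mul_cancel (w := N + 1)
      (fun t ht => subdiag_of_lt _ (by omega)) (fun t ht => subdiag_of_lt _ (by omega))
      (fun i j hij => entry_prodFk_of_add_lt U N hij)
      (fun i j hij => entry_prodFk_of_add_lt V N hij) hne h
    intro m hm
    rcases Nat.lt_or_ge m (N + 1) with hmN | hmN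
    · exact ih (fun m hm => hV m (by omega)) hrest m (by omega)
    · obtain rfl : m = N + 1 := by omega
      exact eq_of_subdiag_eq hsub

/-- The diagonal `J'` in `L(g) E(J) = E(J') L(f)`: comparing diagonal and subdiagonal entries
forces `J' r + g (r - 1) = J r + f r` and `g (r - 1) * J (r - 1) = J' r * f (r - 1)`. -/
noncomputable def exchDiag (J : Fin n → ℝ) (f : ℕ → ℝ) : Fin n → ℝ := fun r =>
  if (r : ℕ) = 0 then J r + f 0
  else (J r + f r) * padded J (r - 1) / (padded J (r - 1) + f (r - 1))

noncomputable def exchSubdiag (J : Fin n → ℝ) (f : ℕ → ℝ) (c : ℕ) : ℝ :=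
  padded (exchDiag J f) (c + 1) * f c / padded J c

section Exchange

variable {J : Fin n → ℝ} {f : ℕ → ℝ}

lemma exchDiag_pos (hJ : ∀ i, 0 < J i) (hf : ∀ t, 0 ≤ f t) (r : Fin n) :
    0 < exchDiag J f r := by
  unfold exchDiag
  split_ifs with hr
  · linarith [hJ r, hf 0]
  · have hJ' : 0 < padded J (r - 1) := by rw [padded_of_lt _ (by omega)]; exact hJ _
    have := hJ r
    have := hf r
    have := hf (r - 1)
    positivity

lemma unitLowerBidiag_exchSubdiag_mul_Ematrix (hJ : ∀ i, 0 < J i) (hf : ∀ t, 0 ≤ f t)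
    (hfn : ∀ t, n ≤ t + 1 → f t = 0) :
    unitLowerBidiag n (exchSubdiag J f) * Ematrix n J
      = Ematrix n (exchDiag J f) * unitLowerBidiag n f := by
  set J' := exchDiag J f
  set g := exchSubdiag J f
  have hJpos : ∀ c, c < n → 0 < padded J c := fun c hc => by
    rw [padded_of_lt _ hc]; exact hJ _
  have hdiag0 : 0 < n → padded J' 0 = padded J 0 + f 0 := fun hn => by
    simp [J', exchDiag, padded_of_lt _ hn]
  have hdiag : ∀ c, c + 1 < n → padded J' (c + 1) + g c = padded J (c + 1) + f (c + 1) := by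
    intro c hc
    have hJc := hJpos c (by omega)
    have := hf c
    simp only [g, exchSubdiag, J', padded_of_lt _ hc, exchDiag]
    simp only [if_neg (Nat.succ_ne_zero c), Nat.add_sub_cancel]
    field_simp
  have hsub : ∀ c, g c * padded J c = padded J' (c + 1) * f c := by
    intro c
    rcases Nat.lt_or_ge c n with hc | hc
    · simp only [g, exchSubdiag, J']
      field_simp [(hJpos c hc).ne']
    · simp [g, exchSubdiag, padded_of_le _ (show n ≤ c by omega),
        padded_of_le J' (show n ≤ c + 1 by omega)]
  apply matrix_ext_entry
  intro i j hi hj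
  rw [entry_Ematrix_mul]
  cases i with
  | zero =>
    rw [entry_unitLowerBidiag_mul_zero, entry_Ematrix, entry_unitLowerBidiag,
      entry_unitLowerBidiag]
    split_ifs <;> first
      | (exfalso; omega) | (exfalso; tauto) | ring1
      | (subst_vars; linarith [hdiag0 hi])
      | (subst_vars; linarith [hdiag0 hi, hfn 0 (by omega)])
  | succ i =>
    rw [entry_unitLowerBidiag_mul_succ _ _ _ hi, entry_Ematrix, entry_Ematrix,
      entry_unitLowerBidiag, entry_unitLowerBidiag]
    split_ifs <;> first
      | (exfalso; omega) | ring1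
      | (subst_vars; linarith [hdiag i hi, hsub i])
      | (subst_vars; linarith [hdiag i hi, hfn (i + 1) (by omega)])

lemma unitLowerBidiag_eq_Fkmatrix {k : ℕ} {g : ℕ → ℝ} (hg : ∀ c, c < k → g c = 0) :
    unitLowerBidiag n g = Fkmatrix n (k + 1) (fun t => g (t + k)) := by
  rw [Fkmatrix_eq_unitLowerBidiag]
  ext r c
  simp only [unitLowerBidiag, subdiag, Matrix.of_apply]
  split_ifs with h1 h2 h3 <;> try rfl
  · rw [padded_of_lt _ (by omega), show c + 1 - (k + 1) + k = (c : ℕ) by omega]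
  · rw [hg c (by omega), neg_zero]

lemma exists_Fkmatrix_mul_Ematrix_eq (k : ℕ) (hJ : ∀ i, 0 < J i)
    {V : Fin (n - (k + 1)) → ℝ} (hV : ∀ t, 0 < V t) :
    ∃ (J' : Fin n → ℝ) (V' : Fin (n - (k + 1)) → ℝ),
      Fkmatrix n (k + 1) V' * Ematrix n J = Ematrix n J' * Fkmatrix n (k + 1) V ∧
      (∀ i, 0 < J' i) ∧ ∀ t, 0 < V' t := by
  set f := subdiag (k + 1) V
  have hf : ∀ c, 0 ≤ f c := subdiag_nonneg fun t => (hV t).le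
  refine ⟨exchDiag J f, fun t => exchSubdiag J f (t + k), ?_, exchDiag_pos hJ hf, fun t => ?_⟩
  · have hvanish : ∀ c, c < k → exchSubdiag J f c = 0 := fun c hc => by
      simp [exchSubdiag, f, subdiag_of_lt V (k := k + 1) (c := c) (by omega)]
    rw [← unitLowerBidiag_eq_Fkmatrix hvanish, Fkmatrix_eq_unitLowerBidiag]
    exact unitLowerBidiag_exchSubdiag_mul_Ematrix hJ hf fun c hc => subdiag_of_le V hc
  · have ht : t + k + 1 < n := by omega
    have hft : f (t + k) = V t := by simp only [f, subdiag_add_succ, padded_of_lt _ t.2]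
    simp only [exchSubdiag, hft, padded_of_lt _ ht, padded_of_lt J (show t + k < n by omega)]
    exact div_pos (mul_pos (exchDiag_pos hJ hf _) (hV t)) (hJ _)

end Exchange

lemma exists_prodFk_mul_Ematrix_eq (N : ℕ) {I : Fin n → ℝ} (hI : ∀ i, 0 < I i)
    {U : (m : ℕ) → Fin (n - (m + 1)) → ℝ} (hU : ∀ m, m ≤ N → ∀ t, 0 < U m t) :
    ∃ (I' : Fin n → ℝ) (U' : (m : ℕ) → Fin (n - (m + 1)) → ℝ),
      prodFk n U' N * Ematrix n I = Ematrix n I' * prodFk n U N ∧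
      (∀ i, 0 < I' i) ∧ ∀ m, m ≤ N → ∀ t, 0 < U' m t := by
  induction N with
  | zero =>
    obtain ⟨I', V', hexch, hI', hV'⟩ := exists_Fkmatrix_mul_Ematrix_eq 0 hI (hU 0 le_rfl)
    refine ⟨I', Function.update U 0 V', ?_, hI', fun m hm => ?_⟩
    · simpa [prodFk] using hexch
    · obtain rfl : m = 0 := by omega
      simpa using hV'
  | succ N ih =>
    obtain ⟨J, U₁, hexch₁, hJ, hU₁⟩ := ih fun m hm => hU m (by omega)
    obtain ⟨I', V', hexch, hI', hV'⟩ :=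
      exists_Fkmatrix_mul_Ematrix_eq (N + 1) hJ (hU (N + 1) le_rfl)
    have hprod : prodFk n (Function.update U₁ (N + 1) V') N = prodFk n U₁ N :=
      prodFk_congr fun m hm => Function.update_of_ne (by omega) _ _
    refine ⟨I', Function.update U₁ (N + 1) V', ?_, hI', fun m hm => ?_⟩
    · rw [prodFk, prodFk, Function.update_self, hprod, mul_assoc, hexch₁, ← mul_assoc, hexch,
        mul_assoc]
    · rcases Nat.lt_or_ge m (N + 1) with hmN | hmN
      · rw [Function.update_of_ne (by omega)]
        exact hU₁ m (by omega)
      · obtain rfl : m = N + 1 := by omega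
        simpa using hV'

end BidiagonalExchange

open BidiagonalExchange in
theorem exists_unique_prodFk_E_exchange_general (n N : ℕ)
    (I : Fin n → ℝ) (hI : ∀ i, 0 < I i)
    (U : (m : ℕ) → Fin (n - (m+1)) → ℝ) (hU : ∀ m, m ≤ N → ∀ i, 0 < U m i) :
    ∃ (I' : Fin n → ℝ) (U' : (m : ℕ) → Fin (n - (m+1)) → ℝ),
      prodFk n U' N * Ematrix n I = Ematrix n I' * prodFk n U N ∧
      (∀ i, 0 < I' i) ∧ (∀ m, m ≤ N → ∀ i, 0 < U' m i) ∧
      ∀ (I'' : Fin n → ℝ) (U'' : (m : ℕ) → Fin (n - (m+1)) → ℝ),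
        prodFk n U'' N * Ematrix n I = Ematrix n I'' * prodFk n U N →
        I'' = I' ∧ ∀ m, m ≤ N → U'' m = U' m := by
  obtain ⟨I', U', hexch, hI', hU'⟩ := exists_prodFk_mul_Ematrix_eq N hI hU
  refine ⟨I', U', hexch, hI', hU', fun I'' U'' h => ?_⟩
  obtain rfl : I'' = I' := eq_of_mul_Ematrix_eq hI
    (fun i hi => by rw [entry_prodFk_self _ _ hi, entry_prodFk_self _ _ hi])
    (fun i hi => entry_prodFk_self U N hi) (sign_entry_prodFk U fun m hm t => (hU m hm t).le)
    h hexch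
  have hprod : prodFk n U'' N = prodFk n U' N :=
    (isUnit_Ematrix fun i => (hI i).ne').mul_left_inj.mp (h.trans hexch.symm)
  exact ⟨rfl, prodFk_injective (fun m hm t => (hU' m hm t).ne') hprod⟩

theorem exists_unique_prodFk_E_exchange (n N : ℕ) (hn : 1 ≤ n) (hN : N ≤ n - 1)
    (I : Fin n → ℝ) (hI : ∀ i, 0 < I i)
    (U : (m : ℕ) → Fin (n - (m+1)) → ℝ) (hU : ∀ m, m ≤ N → ∀ i, 0 < U m i) :
    ∃ (I' : Fin n → ℝ) (U' : (m : ℕ) → Fin (n - (m+1)) → ℝ),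
      prodFk n U' N * Ematrix n I = Ematrix n I' * prodFk n U N ∧
      (∀ i, 0 < I' i) ∧ (∀ m, m ≤ N → ∀ i, 0 < U' m i) ∧
      ∀ (I'' : Fin n → ℝ) (U'' : (m : ℕ) → Fin (n - (m+1)) → ℝ),
        prodFk n U'' N * Ematrix n I = Ematrix n I'' * prodFk n U N →
        I'' = I' ∧ ∀ m, m ≤ N → U'' m = U' m :=
  exists_unique_prodFk_E_exchange_general n N I hI U hU
end

section
/- Let R be a standard tableau of shape μ with n boxes. For 1 ≤ m ≤ n, let t_m be the index of the row of R containing the entry n+1−m. Then the semistandard tableau obtained by successively row-inserting t_1, then t_2, …, then t_n into the empty tableau equals U(μ), the semistandard tableau of shape μ in which every entry in row i equals i. -/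
/-- A semistandard Young tableau of straight shape (rows and columns 0-indexed,
shape given by row lengths `rows`), with positive integer entries, rows weakly
increasing, columns strictly increasing; entries outside the shape are 0. -/
structure SSYT where
  rows : ℕ → ℕ
  rows_anti : ∀ i, rows (i+1) ≤ rows i
  rows_finite : ∃ d, ∀ i, d ≤ i → rows i = 0
  entry : ℕ → ℕ → ℕ
  entry_pos : ∀ i j, j < rows i → 1 ≤ entry i j
  entry_zero : ∀ i j, rows i ≤ j → entry i j = 0
  row_weak : ∀ i j, j + 1 < rows i → entry i j ≤ entry i (j+1)
  col_strict : ∀ i j, j < rows (i+1) → entry i j < entry (i+1) j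

/-- `RowInsert T x T'`: `T'` is the result of row-inserting (row bumping) `x`
into `T`.  For rows `t < m` the value `v t` bumps the leftmost strictly larger
entry, at position `pos t`; the bumped value is `v (t+1)`; at row `m` the value
`v m` is appended at the end of the row. -/
def RowInsert (T : SSYT) (x : ℕ) (T' : SSYT) : Prop :=
  ∃ (m : ℕ) (v : ℕ → ℕ) (pos : ℕ → ℕ),
    v 0 = x ∧
    (∀ t, t < m → pos t < T.rows t ∧ v t < T.entry t (pos t) ∧
      (∀ c, c < pos t → T.entry t c ≤ v t) ∧ v (t+1) = T.entry t (pos t)) ∧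
    pos m = T.rows m ∧ (∀ c, c < T.rows m → T.entry m c ≤ v m) ∧
    T'.rows = Function.update T.rows m (T.rows m + 1) ∧
    (∀ t, t ≤ m → T'.entry t (pos t) = v t) ∧
    (∀ i j, (∀ t, t ≤ m → ¬(i = t ∧ j = pos t)) → T'.entry i j = T.entry i j)

/-!
Let `F w` be the number of letters `w` still to be inserted. After every insertion, for each row
`i` and each `w > i`, the letters `w + 1` in rows `0, …, i` together with the pending ones are at
most the letters `w` in rows `0, …, i - 1` together with the pending ones (`SSYT.Balanced`).
Initially this is the lattice property of `t_n, …, t_1`, the rows of `1, …, n` in `R`, which holds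
because the entry above an entry of `R` is smaller. Along the bumping path `x = v_0 < v_1 < ⋯` the
value `v_i` enters row `i`, and the only case needing care is `w = v_i`: there row `i` holds no
`v_i + 1` other than a bumped `v_(i+1)`, and the old inequality at `v_i` is strict (for `i = 0` by
the lattice property, otherwise because `v_i` was bumped out of row `i - 1`). At the end nothing is
pending, so row `i` contains only the value `i + 1`, and counting letters gives the row lengths.
-/

open Finset

namespace SSYT

variable (S : SSYT)

def rowCount (i w : ℕ) : ℕ := #{j ∈ range (S.rows i) | S.entry i j = w}

def countAbove (i w : ℕ) : ℕ := ∑ r ∈ range i, S.rowCount r w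

def countLE (i N : ℕ) : ℕ := #{j ∈ range (S.rows i) | S.entry i j ≤ N}

lemma entry_mono {i j j' : ℕ} (hjj' : j ≤ j') (hj' : j' < S.rows i) :
    S.entry i j ≤ S.entry i j' := by
  induction j', hjj' using Nat.le_induction with
  | base => rfl
  | succ k _ ih => exact (ih (by omega)).trans (S.row_weak i k hj')

lemma succ_le_entry {i j : ℕ} (hj : j < S.rows i) : i + 1 ≤ S.entry i j := by
  induction i with
  | zero => exact S.entry_pos 0 j hj
  | succ i ih => exact (ih (hj.trans_le (S.rows_anti i))).trans_lt (S.col_strict i j hj)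

lemma rowCount_pos {i j : ℕ} (hj : j < S.rows i) : 0 < S.rowCount i (S.entry i j) :=
  card_pos.2 ⟨j, mem_filter.2 ⟨mem_range.2 hj, rfl⟩⟩

lemma rowCount_eq_zero {i w : ℕ} (h : ∀ j < S.rows i, S.entry i j ≠ w) : S.rowCount i w = 0 :=
  card_eq_zero.2 (filter_eq_empty_iff.2 fun j hj => h j (mem_range.1 hj))

lemma rowCount_eq_zero_of_le {i w : ℕ} (hw : w ≤ i) : S.rowCount i w = 0 :=
  S.rowCount_eq_zero fun j hj => by have := S.succ_le_entry hj; omega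

lemma rowCount_eq_rows {i w : ℕ} (h : ∀ j < S.rows i, S.entry i j = w) :
    S.rowCount i w = S.rows i := by
  rw [rowCount, filter_true_of_mem fun j hj => h j (mem_range.1 hj), card_range]

lemma rowCount_succ_eq_zero {i p a : ℕ} (hle : ∀ c < p, S.entry i c ≤ a)
    (hlt : p < S.rows i → a + 1 < S.entry i p) : S.rowCount i (a + 1) = 0 :=
  S.rowCount_eq_zero fun j hj he => by
    rcases lt_or_ge j p with hjp | hpj
    · have := hle j hjp; omega
    · have := S.entry_mono hpj hj; have := hlt (by omega); omega

lemma countAbove_succ (i w : ℕ) :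
    S.countAbove (i + 1) w = S.countAbove i w + S.rowCount i w :=
  sum_range_succ _ _

lemma countLE_succ_le (i N : ℕ) : S.countLE (i + 1) N ≤ S.countLE i N := by
  refine card_le_card fun j hj => ?_
  simp only [mem_filter, mem_range] at hj ⊢
  exact ⟨hj.1.trans_le (S.rows_anti i), ((S.col_strict i j hj.1).trans_le hj.2).le⟩

lemma countLE_eq_rows {i N : ℕ} (h : ∀ j < S.rows i, S.entry i j ≤ N) :
    S.countLE i N = S.rows i := by
  rw [countLE, filter_true_of_mem fun j hj => h j (mem_range.1 hj), card_range]

variable {S} {S' : SSYT} {i : ℕ}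

lemma rowCount_add_of_replace {p : ℕ} (hrows : S'.rows i = S.rows i) (hp : p < S.rows i)
    (hkeep : ∀ j < S.rows i, j ≠ p → S'.entry i j = S.entry i j) (w : ℕ) :
    S'.rowCount i w + (if S.entry i p = w then 1 else 0)
      = S.rowCount i w + if S'.entry i p = w then 1 else 0 := by
  have hp' := mem_range.2 hp
  rw [rowCount, rowCount, hrows, card_filter, card_filter, ← add_sum_erase _ _ hp',
    ← add_sum_erase _ (fun j => if S.entry i j = w then 1 else 0) hp',
    sum_congr rfl fun j hj => by
      rw [hkeep j (mem_range.1 (mem_of_mem_erase hj)) (ne_of_mem_erase hj)]]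
  ring

lemma rowCount_of_append (hrows : S'.rows i = S.rows i + 1)
    (hkeep : ∀ j < S.rows i, S'.entry i j = S.entry i j) (w : ℕ) :
    S'.rowCount i w = S.rowCount i w + if S'.entry i (S.rows i) = w then 1 else 0 := by
  rw [rowCount, rowCount, hrows, card_filter, card_filter, sum_range_succ,
    sum_congr rfl fun j hj => by rw [hkeep j (mem_range.1 hj)]]

lemma rowCount_congr (hrows : S'.rows i = S.rows i)
    (hkeep : ∀ j < S.rows i, S'.entry i j = S.entry i j) (w : ℕ) :
    S'.rowCount i w = S.rowCount i w := by
  rw [rowCount, rowCount, hrows, filter_congr fun j hj => by rw [hkeep j (mem_range.1 hj)]]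

end SSYT

namespace SSYT

def Balanced (S : SSYT) (F : ℕ → ℕ) : Prop :=
  ∀ i w, i < w → S.countAbove (i + 1) (w + 1) + F (w + 1) ≤ S.countAbove i w + F w

lemma balanced_of_rows_eq_zero {S : SSYT} (h : ∀ i, S.rows i = 0) {F : ℕ → ℕ}
    (hF : ∀ w, 0 < w → F (w + 1) ≤ F w) : S.Balanced F := by
  have hzero : ∀ i w, S.countAbove i w = 0 := fun i w =>
    sum_eq_zero fun r _ => by simp [rowCount, h r]
  intro i w hiw
  rw [hzero, hzero]
  simpa using hF w (by omega)

namespace Balanced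

variable {S : SSYT}

lemma rowCount_eq_zero (hB : S.Balanced 0) {i w : ℕ} (hw : i + 1 < w) : S.rowCount i w = 0 := by
  induction i using Nat.strong_induction_on generalizing w with
  | _ i ih =>
    obtain ⟨u, rfl⟩ : ∃ u, w = u + 1 := ⟨w - 1, by omega⟩
    have hu : S.countAbove i u = 0 := sum_eq_zero fun r hr => ih r (mem_range.1 hr) (by
      have := mem_range.1 hr; omega)
    have := hB i u (by omega)
    simp only [Pi.zero_apply, add_zero, hu, countAbove_succ] at this
    omega

lemma entry_eq (hB : S.Balanced 0) {i j : ℕ} (hj : j < S.rows i) : S.entry i j = i + 1 := by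
  have hpos := S.rowCount_pos hj
  have := S.succ_le_entry hj
  by_contra hne
  rw [hB.rowCount_eq_zero (by omega)] at hpos
  exact lt_irrefl 0 hpos

end Balanced

end SSYT

lemma RowInsert.one_le {S S' : SSYT} {x : ℕ} (h : RowInsert S x S') : 1 ≤ x := by
  obtain ⟨K, v, pos, hv0, hbump, hposK, -, hrows, hset, -⟩ := h
  have hpos : pos 0 < S'.rows 0 := by
    rw [hrows]
    rcases Nat.eq_zero_or_pos K with rfl | hK
    · rw [Function.update_self, hposK]; omega
    · rw [Function.update_of_ne hK.ne]; exact (hbump 0 hK).1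
  rw [← hv0, ← hset 0 (Nat.zero_le K)]
  exact S'.entry_pos 0 _ hpos

/-- The effect of a row insertion on row contents: the path ends in row `K`, and row `i ≤ K`
receives `v i` and, if `i < K`, loses `v (i + 1)`. -/
structure BumpPath (S S' : SSYT) (x K : ℕ) (v : ℕ → ℕ) : Prop where
  start : v 0 = x
  rowCount_add : ∀ i w, S'.rowCount i w + (if i < K ∧ v (i + 1) = w then 1 else 0)
    = S.rowCount i w + if i ≤ K ∧ v i = w then 1 else 0
  rowCount_bumped_pos : ∀ i < K, 0 < S.rowCount i (v (i + 1))
  rowCount_succ_eq_zero : ∀ i ≤ K, ¬(i < K ∧ v (i + 1) = v i + 1) → S.rowCount i (v i + 1) = 0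
  rows_eq : S'.rows = Function.update S.rows K (S.rows K + 1)

theorem RowInsert.exists_bumpPath {S S' : SSYT} {x : ℕ} (h : RowInsert S x S') :
    ∃ K v, BumpPath S S' x K v := by
  obtain ⟨K, v, pos, hv0, hbump, hposK, hrowK, hrows, hset, hkeep⟩ := h
  have hrows_ne : ∀ i ≠ K, S'.rows i = S.rows i := fun i hi => by
    rw [hrows, Function.update_of_ne hi]
  have hkeep' : ∀ i j, (i ≤ K → j ≠ pos i) → S'.entry i j = S.entry i j :=
    fun i j h => hkeep i j fun u hu ⟨hi, hj⟩ => h (hi ▸ hu) (hi ▸ hj)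
  refine ⟨K, v, hv0, fun i w => ?_, fun i hi => ?_, fun i hi hne => ?_, hrows⟩
  · rcases lt_trichotomy i K with hi | rfl | hi
    · have := SSYT.rowCount_add_of_replace (hrows_ne i hi.ne) (hbump i hi).1
        (fun j _ hj => hkeep' i j fun _ => hj) w
      rw [hset i hi.le, ← (hbump i hi).2.2.2] at this
      simpa [hi, hi.le] using this
    · have := SSYT.rowCount_of_append (by rw [hrows, Function.update_self])
        (fun j hj => hkeep' i j fun _ => by omega) w
      rw [← hposK, hset i le_rfl] at this
      simpa using this
    · rw [SSYT.rowCount_congr (hrows_ne i hi.ne') (fun j _ => hkeep' i j fun h => by omega)]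
      simp [hi.not_gt, hi.not_ge]
  · rw [(hbump i hi).2.2.2]
    exact S.rowCount_pos (hbump i hi).1
  · rcases hi.lt_or_eq with hi | rfl
    · obtain ⟨-, hlt, hle, hv⟩ := hbump i hi
      have : v (i + 1) ≠ v i + 1 := fun h => hne ⟨hi, h⟩
      exact S.rowCount_succ_eq_zero hle fun _ => by omega
    · exact S.rowCount_succ_eq_zero (fun c hc => hrowK c (hposK ▸ hc)) fun h => by omega

namespace BumpPath

variable {S S' : SSYT} {x K : ℕ} {v : ℕ → ℕ}

lemma countAbove_add (hp : BumpPath S S' x K v) (i w : ℕ) :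
    S'.countAbove i w + (if i ≤ K ∧ v i = w then 1 else 0)
      = S.countAbove i w + if x = w then 1 else 0 := by
  induction i with
  | zero => simp [SSYT.countAbove, hp.start]
  | succ i ih =>
    have := hp.rowCount_add i w
    rw [SSYT.countAbove_succ, SSYT.countAbove_succ]
    split_ifs at * <;> omega

lemma le_of_rows_eq_zero (hp : BumpPath S S' x K v) {d : ℕ} (hd : S.rows d = 0) : K ≤ d := by
  by_contra! h
  have := hp.rowCount_bumped_pos d h
  simp [SSYT.rowCount, hd] at this

lemma rows_eq_zero (hp : BumpPath S S' x K v) {d : ℕ} (hd : ∀ q ≥ d, S.rows q = 0) :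
    ∀ q ≥ d + 1, S'.rows q = 0 := by
  intro q hq
  have := hp.le_of_rows_eq_zero (hd d le_rfl)
  rw [hp.rows_eq, Function.update_of_ne (by omega)]
  exact hd q (by omega)

lemma countAbove_of_lt (hp : BumpPath S S' x K v) {d : ℕ} (hd : S.rows d = 0) {N : ℕ}
    (hN : d < N) (w : ℕ) : S'.countAbove N w = S.countAbove N w + if x = w then 1 else 0 := by
  have := hp.le_of_rows_eq_zero hd
  simpa [show ¬N ≤ K by omega] using hp.countAbove_add N w

variable {F F' : ℕ → ℕ}

lemma countAbove_lt (hp : BumpPath S S' x K v) (hF : ∀ w, F w = F' w + if w = x then 1 else 0)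
    (hF' : ∀ w, 0 < w → F' (w + 1) ≤ F' w) (hx : 0 < x) (hB : S.Balanced F) {i : ℕ} (hi : i ≤ K) :
    S.countAbove i (v i + 1) + F (v i + 1) < S.countAbove i (v i) + F (v i) := by
  cases i with
  | zero =>
    have := hF' x hx
    simp only [SSYT.countAbove, range_zero, sum_empty, zero_add, hp.start, hF, if_true,
      if_neg (Nat.succ_ne_self x)]
    omega
  | succ j =>
    have hpos := hp.rowCount_bumped_pos j hi
    have hj : j < v (j + 1) := by
      by_contra! h
      rw [S.rowCount_eq_zero_of_le h] at hpos
      exact lt_irrefl 0 hpos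
    have := hB j (v (j + 1)) hj
    rw [S.countAbove_succ j (v (j + 1))]
    omega

theorem balanced (hp : BumpPath S S' x K v) (hF : ∀ w, F w = F' w + if w = x then 1 else 0)
    (hF' : ∀ w, 0 < w → F' (w + 1) ≤ F' w) (hx : 0 < x) (hB : S.Balanced F) :
    S'.Balanced F' := by
  intro i w hiw
  have hold := hB i w hiw
  have hnext := hp.countAbove_add (i + 1) (w + 1)
  have hcur := hp.countAbove_add i w
  rw [hF, hF] at hold
  by_cases hbump : i ≤ K ∧ v i = w
  · obtain ⟨hiK, rfl⟩ := hbump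
    by_cases hsucc : i < K ∧ v (i + 1) = v i + 1
    · simp only [hsucc, Nat.succ_le_of_lt hsucc.1, and_self, if_true] at hnext
      split_ifs at * <;> omega
    · have hzero := hp.rowCount_succ_eq_zero i hiK hsucc
      have hlt := hp.countAbove_lt hF hF' hx hB hiK
      rw [hF, hF] at hlt
      rw [S.countAbove_succ, hzero] at hnext
      split_ifs at * <;> omega
  · rw [if_neg hbump] at hcur
    split_ifs at * <;> omega

end BumpPath

def suffixContent (t : ℕ → ℕ) (n m w : ℕ) : ℕ := #{k ∈ Ioc m n | t k = w}

section Word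

variable {t : ℕ → ℕ} {n : ℕ}

lemma suffixContent_self : suffixContent t n n = 0 := by
  ext w
  simp [suffixContent]

lemma suffixContent_eq_succ_add {m : ℕ} (hm : m < n) (w : ℕ) :
    suffixContent t n m w = suffixContent t n (m + 1) w + if w = t (m + 1) then 1 else 0 := by
  rw [suffixContent, suffixContent, ← Finset.insert_Ioc_succ_left_eq_Ioc hm, Order.succ_eq_add_one,
    filter_insert]
  by_cases h : t (m + 1) = w
  · simp [h]
  · simp [h, Ne.symm h]

theorem insert_lattice_word_invariant
    (hlat : ∀ m w, 0 < w → suffixContent t n m (w + 1) ≤ suffixContent t n m w)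
    (T : ℕ → SSYT) (hT0 : ∀ i, (T 0).rows i = 0)
    (hT : ∀ m < n, RowInsert (T m) (t (m + 1)) (T (m + 1))) {m : ℕ} (hm : m ≤ n) :
    (T m).Balanced (suffixContent t n m) ∧ (∀ q ≥ m, (T m).rows q = 0) ∧
      ∀ N ≥ m, ∀ w, (T m).countAbove N w + suffixContent t n m w = suffixContent t n 0 w := by
  induction m with
  | zero =>
    refine ⟨SSYT.balanced_of_rows_eq_zero hT0 (hlat 0), fun q _ => hT0 q, fun N _ w => ?_⟩
    rw [SSYT.countAbove, sum_eq_zero fun r _ => by simp [SSYT.rowCount, hT0 r], zero_add]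
  | succ m ih =>
    obtain ⟨hB, hrows, hcount⟩ := ih (by omega)
    have hins := hT m (by omega)
    obtain ⟨K, v, hp⟩ := hins.exists_bumpPath
    refine ⟨hp.balanced (suffixContent_eq_succ_add (by omega)) (hlat (m + 1)) hins.one_le hB,
      hp.rows_eq_zero hrows, fun N hN w => ?_⟩
    rw [hp.countAbove_of_lt (hrows m le_rfl) hN, ← hcount N (by omega) w,
      suffixContent_eq_succ_add (m := m) (by omega) w]
    split_ifs <;> omega

theorem insert_lattice_word_gives_U
    (hlat : ∀ m w, 0 < w → suffixContent t n m (w + 1) ≤ suffixContent t n m w)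
    (T : ℕ → SSYT) (hT0 : ∀ i, (T 0).rows i = 0)
    (hT : ∀ m < n, RowInsert (T m) (t (m + 1)) (T (m + 1))) :
    (∀ i j, j < (T n).rows i → (T n).entry i j = i + 1) ∧
      ∀ i, (T n).rows i = suffixContent t n 0 (i + 1) := by
  obtain ⟨hB, -, hcount⟩ := insert_lattice_word_invariant hlat T hT0 hT le_rfl
  rw [suffixContent_self] at hB hcount
  have hentry : ∀ i j, j < (T n).rows i → (T n).entry i j = i + 1 := fun i j => hB.entry_eq
  refine ⟨hentry, fun i => ?_⟩
  have hother : ∀ r ∈ range (n + i + 1), r ≠ i → (T n).rowCount r (i + 1) = 0 := fun r _ hr => by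
    rcases hr.lt_or_gt with hr | hr
    · exact hB.rowCount_eq_zero (by omega)
    · exact (T n).rowCount_eq_zero_of_le hr
  rw [← hcount (n + i + 1) (by omega) (i + 1), Pi.zero_apply, add_zero, SSYT.countAbove,
    sum_eq_single i hother fun h => absurd (mem_range.2 (by omega)) h,
    (T n).rowCount_eq_rows (hentry i)]

end Word

theorem suffixContent_succ_eq_countLE (R : SSYT) (n : ℕ)
    (hbound : ∀ i j, j < R.rows i → 1 ≤ R.entry i j ∧ R.entry i j ≤ n)
    (hdistinct : ∀ v, 1 ≤ v → v ≤ n → ∃! p : ℕ × ℕ, p.2 < R.rows p.1 ∧ R.entry p.1 p.2 = v)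
    (t : ℕ → ℕ) (ht1 : ∀ m, 1 ≤ m → m ≤ n → 1 ≤ t m)
    (ht : ∀ m, 1 ≤ m → m ≤ n → ∃ j, j < R.rows (t m - 1) ∧ R.entry (t m - 1) j = n + 1 - m)
    (m i : ℕ) : suffixContent t n m (i + 1) = R.countLE i (n - m) := by
  symm
  refine card_bij (fun j _ => n + 1 - R.entry i j) (fun j hj => ?_) (fun j hj j' hj' he => ?_)
    fun k hk => ?_
  · simp only [mem_filter, mem_range, mem_Ioc] at hj ⊢
    have hb := hbound i j hj.1
    obtain ⟨j', hj', he'⟩ := ht (n + 1 - R.entry i j) (by omega) (by omega)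
    have hpos := (hdistinct _ hb.1 hb.2).unique (y₁ := (_, j')) (y₂ := (i, j))
      ⟨hj', he'.trans (by omega)⟩ ⟨hj.1, rfl⟩
    have := ht1 (n + 1 - R.entry i j) (by omega) (by omega)
    simp only [Prod.mk.injEq] at hpos
    omega
  · simp only [mem_filter, mem_range] at hj hj'
    have hb := hbound i j hj.1
    have hb' := hbound i j' hj'.1
    have heq : R.entry i j' = R.entry i j := by omega
    have hpos := (hdistinct _ hb.1 hb.2).unique (y₁ := (i, j)) (y₂ := (i, j'))
      ⟨hj.1, rfl⟩ ⟨hj'.1, heq⟩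
    exact (Prod.mk.inj hpos).2
  · simp only [mem_filter, mem_Ioc] at hk
    obtain ⟨⟨hmk, hkn⟩, htk⟩ := hk
    obtain ⟨j, hj, he⟩ := ht k (by omega) hkn
    rw [htk, Nat.add_sub_cancel] at hj he
    exact ⟨j, by simp only [mem_filter, mem_range]; omega, by omega⟩

theorem insert_rows_of_standard_gives_U_general (R : SSYT) (n : ℕ)
    (hbound : ∀ i j, j < R.rows i → 1 ≤ R.entry i j ∧ R.entry i j ≤ n)
    (hdistinct : ∀ v, 1 ≤ v → v ≤ n →
      ∃! p : ℕ × ℕ, p.2 < R.rows p.1 ∧ R.entry p.1 p.2 = v)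
    (t : ℕ → ℕ)
    (ht : ∀ m, 1 ≤ m → m ≤ n →
      ∃ j, j < R.rows (t m - 1) ∧ R.entry (t m - 1) j = n + 1 - m)
    (T : ℕ → SSYT)
    (hT0 : (T 0).rows = fun _ => 0)
    (hTstep : ∀ m, m < n → RowInsert (T m) (t (m+1)) (T (m+1))) :
    (T n).rows = R.rows ∧
    (T n).entry = fun i j => if j < R.rows i then i + 1 else 0 := by
  have ht1 : ∀ m, 1 ≤ m → m ≤ n → 1 ≤ t m := fun m hm hmn => by
    obtain ⟨k, rfl⟩ : ∃ k, m = k + 1 := ⟨m - 1, by omega⟩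
    exact (hTstep k (by omega)).one_le
  have hcontent := suffixContent_succ_eq_countLE R n hbound hdistinct t ht1 ht
  have hlat : ∀ m w, 0 < w → suffixContent t n m (w + 1) ≤ suffixContent t n m w := by
    intro m w hw
    obtain ⟨i, rfl⟩ : ∃ i, w = i + 1 := ⟨w - 1, by omega⟩
    rw [hcontent, hcontent]
    exact R.countLE_succ_le i _
  obtain ⟨hentry, hrows⟩ := insert_lattice_word_gives_U hlat T (congrFun hT0) hTstep
  have hrowsR : ∀ i, (T n).rows i = R.rows i := fun i => by
    rw [hrows, hcontent, Nat.sub_zero, R.countLE_eq_rows fun j hj => (hbound i j hj).2]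
  refine ⟨funext hrowsR, funext fun i => funext fun j => ?_⟩
  split_ifs with hj
  · exact hentry i j (by rwa [hrowsR])
  · exact (T n).entry_zero i j (by rw [hrowsR]; omega)

theorem insert_rows_of_standard_gives_U (R : SSYT) (n : ℕ)
    (hbound : ∀ i j, j < R.rows i → 1 ≤ R.entry i j ∧ R.entry i j ≤ n)
    (hdistinct : ∀ v, 1 ≤ v → v ≤ n →
      ∃! p : ℕ × ℕ, p.2 < R.rows p.1 ∧ R.entry p.1 p.2 = v)
    (t : ℕ → ℕ)
    (ht1 : ∀ m, 1 ≤ m → m ≤ n → 1 ≤ t m)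
    (ht : ∀ m, 1 ≤ m → m ≤ n →
      ∃ j, j < R.rows (t m - 1) ∧ R.entry (t m - 1) j = n + 1 - m)
    (T : ℕ → SSYT)
    (hT0 : (T 0).rows = fun _ => 0)
    (hTstep : ∀ m, m < n → RowInsert (T m) (t (m+1)) (T (m+1))) :
    (T n).rows = R.rows ∧
    (T n).entry = fun i j => if j < R.rows i then i + 1 else 0 :=
  insert_rows_of_standard_gives_U_general R n hbound hdistinct t ht T hT0 hTstep
end
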